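/- arXiv:2604.25595 — 5 statements merged into one kernel-verified Lean document; each statement's English description precedes it below -/
import Mathlib

section
/- Let X be a metric space with bounded geometry equipped with a free, proper, isometric right action of a countable discrete group Γ. Then X admits a Γ-equivariant coarse embedding into a real Hilbert space (equipped with a right Γ-action by isometries) if and only if there exists a Γ-invariant conditionally negative definite kernel k : X × X → ℝ which is controlled and proper. (This is the kernel-level content of Theorem 5.1: equivariant coarse embeddability of X is equivalent to a-T-menability of the equivariant coarse groupoid G(X,Γ).) -/
structure RightAction (Γ : Type*) (X : Type*) [Group Γ] where
  act : X → Γ → X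
  act_one : ∀ x, act x 1 = x
  act_mul : ∀ x γ δ, act (act x γ) δ = act x (γ * δ)

/-- The action is by isometries. -/
def RightAction.IsIsometric {Γ X : Type*} [Group Γ] [MetricSpace X]
    (ρ : RightAction Γ X) : Prop :=
  ∀ (x y : X) (γ : Γ), dist (ρ.act x γ) (ρ.act y γ) = dist x y

/-- The action is free. -/
def RightAction.IsFree {Γ X : Type*} [Group Γ] (ρ : RightAction Γ X) : Prop :=
  ∀ (x : X) (γ : Γ), ρ.act x γ = x → γ = 1

/-- The action is metrically proper. -/
def RightAction.IsProper {Γ X : Type*} [Group Γ] [MetricSpace X]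
    (ρ : RightAction Γ X) : Prop :=
  ∀ (x : X) (R : ℝ), {γ : Γ | dist x (ρ.act x γ) ≤ R}.Finite

/-- `X` has bounded geometry. -/
def BoundedGeometry (X : Type*) [MetricSpace X] : Prop :=
  ∀ R : ℝ, 0 ≤ R → ∃ N : ℕ, ∀ x : X,
    {y : X | dist x y ≤ R}.Finite ∧ {y : X | dist x y ≤ R}.ncard ≤ N

/-- A map between metric spaces is a coarse embedding. -/
def IsCoarseEmbedding {X Y : Type*} [MetricSpace X] [MetricSpace Y] (f : X → Y) : Prop :=
  ∃ ρminus ρplus : ℝ → ℝ, Monotone ρminus ∧ Monotone ρplus ∧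
    Filter.Tendsto ρminus Filter.atTop Filter.atTop ∧
    ∀ x y : X, ρminus (dist x y) ≤ dist (f x) (f y) ∧ dist (f x) (f y) ≤ ρplus (dist x y)

/-- Conditionally negative definite kernel. -/
def IsCondNegDef {X : Type*} (k : X → X → ℝ) : Prop :=
  (∀ x, k x x = 0) ∧ (∀ x y, k x y = k y x) ∧
    ∀ (n : ℕ) (y : Fin n → X) (c : Fin n → ℝ), (∑ i, c i) = 0 →
      ∑ i, ∑ j, c i * c j * k (y i) (y j) ≤ 0

def IsControlledKernel {X : Type*} [MetricSpace X] (k : X → X → ℝ) : Prop :=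
  ∀ R : ℝ, 0 ≤ R → ∃ B : ℝ, 0 ≤ B ∧ ∀ x y : X, dist x y ≤ R → k x y ≤ B

def IsProperKernel {X : Type*} [MetricSpace X] (k : X → X → ℝ) : Prop :=
  ∀ C : ℝ, 0 ≤ C → ∃ S : ℝ, 0 ≤ S ∧ ∀ x y : X, k x y ≤ C → dist x y ≤ S

/-- A real Hilbert space equipped with a right `Γ`-action by isometries. -/
structure HilbertRight (Γ : Type*) [Group Γ] where
  H : Type
  [instNACG : NormedAddCommGroup H]
  [instIPS : InnerProductSpace ℝ H]
  [instCS : CompleteSpace H]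
  τ : RightAction Γ H
  isom : ∀ (u v : H) (γ : Γ), dist (τ.act u γ) (τ.act v γ) = dist u v

attribute [instance] HilbertRight.instNACG HilbertRight.instIPS HilbertRight.instCS

noncomputable section Constr

variable {Y : Type}

/-- Sum-of-coefficients linear map. -/
noncomputable def sumFun (Y : Type) : (Y →₀ ℝ) →ₗ[ℝ] ℝ := Finsupp.lsum ℝ fun _ => LinearMap.id

@[simp] lemma sumFun_single (x : Y) (a : ℝ) : sumFun Y (Finsupp.single x a) = a := by
  simp [sumFun]

/-- The sum-zero subspace. -/
noncomputable def Ew (Y : Type) : Submodule ℝ (Y →₀ ℝ) := LinearMap.ker (sumFun Y)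

/-- The bilinear form associated to a kernel. -/
noncomputable def Kb (κ : Y → Y → ℝ) : (Y →₀ ℝ) →ₗ[ℝ] (Y →₀ ℝ) →ₗ[ℝ] ℝ :=
  Finsupp.lsum ℝ fun x => LinearMap.toSpanSingleton ℝ _
    (Finsupp.lsum ℝ fun y => LinearMap.toSpanSingleton ℝ ℝ (κ x y))

@[simp] lemma Kb_single (κ : Y → Y → ℝ) (x y : Y) (a b : ℝ) :
    Kb κ (Finsupp.single x a) (Finsupp.single y b) = a * b * κ x y := by
  simp [Kb, LinearMap.toSpanSingleton_apply, smul_eq_mul]; ring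

lemma Kb_symm {κ : Y → Y → ℝ} (hsym : ∀ x y, κ x y = κ y x) (f g : Y →₀ ℝ) :
    Kb κ f g = Kb κ g f := by
  induction f using Finsupp.induction_linear with
  | zero => simp
  | add f₁ f₂ h₁ h₂ => simp [map_add, h₁, h₂]
  | single x a =>
    induction g using Finsupp.induction_linear with
    | zero => simp
    | add g₁ g₂ h₁ h₂ => simp [map_add, h₁, h₂]
    | single y b => rw [Kb_single, Kb_single, hsym x y]; ring

lemma Kb_apply_eq_sum (κ : Y → Y → ℝ) (f g : Y →₀ ℝ) :
    Kb κ f g = ∑ x ∈ f.support, ∑ y ∈ g.support, f x * g y * κ x y := by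
  rw [Kb, Finsupp.lsum_apply, Finsupp.sum, LinearMap.sum_apply]
  refine Finset.sum_congr rfl fun x hx => ?_
  simp only [LinearMap.toSpanSingleton_apply, LinearMap.smul_apply, Finsupp.lsum_apply,
    Finsupp.sum, smul_eq_mul, Finset.mul_sum]
  refine Finset.sum_congr rfl fun y hy => ?_
  ring

lemma sumFun_eq_sum (f : Y →₀ ℝ) : sumFun Y f = ∑ x ∈ f.support, f x := by
  rw [sumFun, Finsupp.lsum_apply, Finsupp.sum]; rfl

/-- CND kernels give a nonpositive form on the sum-zero subspace. -/
lemma Kb_self_nonpos {κ : Y → Y → ℝ} (hcnd : IsCondNegDef κ) (f : Y →₀ ℝ)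
    (hf : sumFun Y f = 0) : Kb κ f f ≤ 0 := by
  classical
  obtain ⟨hzero, hsym, h⟩ := hcnd
  set s := f.support with hs
  let e : s ≃ Fin s.card := s.equivFin
  have key := h s.card (fun i => (e.symm i : Y)) (fun i => f (e.symm i : Y)) ?_
  · rw [Kb_apply_eq_sum]
    calc ∑ x ∈ s, ∑ y ∈ s, f x * f y * κ x y
        = ∑ i : Fin s.card, ∑ j : Fin s.card,
            f (e.symm i : Y) * f (e.symm j : Y) * κ (e.symm i : Y) (e.symm j : Y) := by
          rw [← Finset.sum_coe_sort s, ← Equiv.sum_comp e.symm]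
          refine Fintype.sum_congr _ _ fun i => ?_
          rw [← Finset.sum_coe_sort s, ← Equiv.sum_comp e.symm]
      _ ≤ 0 := key
  · rw [sumFun_eq_sum] at hf
    rw [← Finset.sum_coe_sort s (fun x => f x), ← Equiv.sum_comp e.symm] at hf
    exact hf

/-- A conditionally negative definite kernel, bundled. -/
def CNDK (Y : Type) := {κ : Y → Y → ℝ // IsCondNegDef κ}

variable {Y : Type}

/-- The pre-Hilbert space of a CND kernel: sum-zero finitely supported functions. -/
noncomputable def PreH (_c : CNDK Y) : Type := ↥(Ew Y)

noncomputable instance (c : CNDK Y) : AddCommGroup (PreH c) :=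
  inferInstanceAs (AddCommGroup ↥(Ew Y))
noncomputable instance (c : CNDK Y) : Module ℝ (PreH c) :=
  inferInstanceAs (Module ℝ ↥(Ew Y))

/-- Underlying finsupp of an element of `PreH`. -/
def PreH.val {c : CNDK Y} (v : PreH c) : Y →₀ ℝ := Subtype.val (p := (· ∈ Ew Y)) v

lemma PreH.sum_zero {c : CNDK Y} (v : PreH c) : sumFun Y v.val = 0 :=
  LinearMap.mem_ker.mp (Subtype.prop (p := (· ∈ Ew Y)) v)

@[simp] lemma PreH.val_add {c : CNDK Y} (u v : PreH c) : (u + v).val = u.val + v.val := rfl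
@[simp] lemma PreH.val_sub {c : CNDK Y} (u v : PreH c) : (u - v).val = u.val - v.val := rfl
@[simp] lemma PreH.val_smul {c : CNDK Y} (r : ℝ) (v : PreH c) : (r • v).val = r • v.val := rfl
@[simp] lemma PreH.val_zero {c : CNDK Y} : (0 : PreH c).val = 0 := rfl
@[simp] lemma PreH.val_mk {c : CNDK Y} (f : Y →₀ ℝ) (h : f ∈ Ew Y) :
    (⟨f, h⟩ : PreH c).val = f := rfl

lemma PreH.ext {c : CNDK Y} {u v : PreH c} (h : u.val = v.val) : u = v := Subtype.ext h

noncomputable def preCore (c : CNDK Y) : PreInnerProductSpace.Core ℝ (PreH c) where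
  inner u v := -(Kb c.1 u.val v.val) / 2
  conj_inner_symm u v := by
    simp only [starRingEnd_apply, star_trivial]
    rw [Kb_symm c.2.2.1]
  re_inner_nonneg u := by
    have := Kb_self_nonpos c.2 u.val u.sum_zero
    simp only [RCLike.re_to_real]
    linarith
  add_left u v w := by
    simp only [PreH.val_add, map_add, LinearMap.add_apply]; ring
  smul_left u v r := by
    simp only [PreH.val_smul, map_smul, LinearMap.smul_apply, smul_eq_mul,
      starRingEnd_apply, star_trivial]
    ring

noncomputable instance PreH.seminormed (c : CNDK Y) : SeminormedAddCommGroup (PreH c) :=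
  @InnerProductSpace.Core.toSeminormedAddCommGroup ℝ (PreH c) _ _ _ (preCore c)

noncomputable instance PreH.ips (c : CNDK Y) : InnerProductSpace ℝ (PreH c) :=
  { toNormedSpace := @InnerProductSpace.Core.toNormedSpace ℝ (PreH c) _ _ _ (preCore c)
    toInner := (preCore c).toInner
    norm_sq_eq_re_inner := fun v => by
      have h : ‖v‖ = Real.sqrt (RCLike.re ((preCore c).inner v v)) := rfl
      rw [h, Real.sq_sqrt ((preCore c).re_inner_nonneg v)]
    conj_inner_symm := (preCore c).conj_inner_symm
    add_left := (preCore c).add_left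
    smul_left := (preCore c).smul_left }

lemma PreH.inner_def {c : CNDK Y} (u v : PreH c) :
    (inner ℝ u v : ℝ) = -(Kb c.1 u.val v.val) / 2 := rfl
/-- The element `δ_x - δ_y` of the pre-Hilbert space. -/
noncomputable def dl (c : CNDK Y) (x y : Y) : PreH c :=
  ⟨Finsupp.single x 1 - Finsupp.single y 1, by
    simp [Ew, LinearMap.mem_ker, map_sub]⟩

@[simp] lemma dl_val (c : CNDK Y) (x y : Y) :
    (dl c x y).val = Finsupp.single x 1 - Finsupp.single y 1 := rfl

@[simp] lemma dl_self (c : CNDK Y) (x : Y) : dl c x x = 0 := by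
  apply PreH.ext; simp

lemma dl_add (c : CNDK Y) (x y z : Y) : dl c x y + dl c y z = dl c x z := by
  apply PreH.ext; simp only [PreH.val_add, dl_val]; abel

lemma dl_sub (c : CNDK Y) (x y z : Y) : dl c x z - dl c y z = dl c x y := by
  apply PreH.ext; simp only [PreH.val_sub, dl_val]; abel

lemma inner_dl_self (c : CNDK Y) (x y : Y) : (inner ℝ (dl c x y) (dl c x y) : ℝ) = c.1 x y := by
  rw [PreH.inner_def, dl_val]
  simp only [map_sub, LinearMap.sub_apply, Kb_single]
  rw [c.2.1 x, c.2.1 y, c.2.2.1 y x]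
  ring

lemma norm_dl (c : CNDK Y) (x y : Y) : ‖dl c x y‖ = Real.sqrt (c.1 x y) := by
  rw [@norm_eq_sqrt_re_inner ℝ, inner_dl_self]; rfl

lemma nonneg_of_cnd {Z : Type*} {κ : Z → Z → ℝ} (h : IsCondNegDef κ) (x y : Z) : 0 ≤ κ x y := by
  have h2 := h.2.2 2 ![x, y] ![1, -1] (by simp [Fin.sum_univ_two])
  simp only [Fin.sum_univ_two, Matrix.cons_val_zero, Matrix.cons_val_one, Matrix.head_cons] at h2
  rw [h.1 x, h.1 y, h.2.1 y x] at h2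
  linarith

/-- Pushforward of finsupps along a self-map. -/
noncomputable def Lf (σ : Y → Y) : (Y →₀ ℝ) →ₗ[ℝ] (Y →₀ ℝ) := Finsupp.lmapDomain ℝ ℝ σ

@[simp] lemma Lf_single (σ : Y → Y) (x : Y) (a : ℝ) :
    Lf σ (Finsupp.single x a) = Finsupp.single (σ x) a := by
  simp [Lf, Finsupp.lmapDomain_apply, Finsupp.mapDomain_single]

lemma sumFun_Lf (σ : Y → Y) (f : Y →₀ ℝ) : sumFun Y (Lf σ f) = sumFun Y f := by
  induction f using Finsupp.induction_linear with
  | zero => simp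
  | add f g hf hg => simp [map_add, hf, hg]
  | single x a => simp

lemma Kb_Lf {κ : Y → Y → ℝ} {σ : Y → Y} (hκ : ∀ x y, κ (σ x) (σ y) = κ x y)
    (f g : Y →₀ ℝ) : Kb κ (Lf σ f) (Lf σ g) = Kb κ f g := by
  induction f using Finsupp.induction_linear with
  | zero => simp
  | add f₁ f₂ h₁ h₂ => simp [map_add, LinearMap.add_apply, h₁, h₂]
  | single x a =>
    induction g using Finsupp.induction_linear with
    | zero => simp
    | add g₁ g₂ h₁ h₂ =>
      simp only [Lf_single] at h₁ h₂ ⊢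
      simp [map_add, h₁, h₂]
    | single y b => simp [hκ x y]

/-- The induced linear map on the pre-Hilbert space. -/
noncomputable def Lq (c : CNDK Y) (σ : Y → Y) : PreH c →ₗ[ℝ] PreH c where
  toFun v := ⟨Lf σ v.val, by
    simp only [Ew, LinearMap.mem_ker, sumFun_Lf]; exact v.sum_zero⟩
  map_add' u v := by
    apply PreH.ext
    simp only [PreH.val_add, map_add]
    rfl
  map_smul' r v := by
    apply PreH.ext
    simp only [PreH.val_smul, map_smul, RingHom.id_apply]
    rfl

@[simp] lemma Lq_val (c : CNDK Y) (σ : Y → Y) (v : PreH c) : (Lq c σ v).val = Lf σ v.val := rfl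

lemma Lq_dl (c : CNDK Y) (σ : Y → Y) (x y : Y) : Lq c σ (dl c x y) = dl c (σ x) (σ y) := by
  apply PreH.ext; simp [map_sub]

lemma inner_Lq {c : CNDK Y} {σ : Y → Y} (hκ : ∀ x y, c.1 (σ x) (σ y) = c.1 x y)
    (u v : PreH c) : (inner ℝ (Lq c σ u) (Lq c σ v) : ℝ) = inner ℝ u v := by
  rw [PreH.inner_def, PreH.inner_def, Lq_val, Lq_val, Kb_Lf hκ]

lemma isometry_Lq {c : CNDK Y} {σ : Y → Y} (hκ : ∀ x y, c.1 (σ x) (σ y) = c.1 x y) :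
    Isometry (Lq c σ) := by
  apply AddMonoidHomClass.isometry_of_norm
  intro v
  rw [@norm_eq_sqrt_re_inner ℝ, @norm_eq_sqrt_re_inner ℝ, inner_Lq hκ]
open UniformSpace in
/-- The induced map on the completion. -/
noncomputable def cmap (c : CNDK Y) (σ : Y → Y) :
    Completion (PreH c) → Completion (PreH c) :=
  Completion.map (Lq c σ)

section cmapLemmas

open UniformSpace

variable {c : CNDK Y} {σ σ' : Y → Y}

lemma uc_Lq (hκ : ∀ x y, c.1 (σ x) (σ y) = c.1 x y) : UniformContinuous (Lq c σ) := (isometry_Lq hκ).uniformContinuous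

lemma cmap_coe (hκ : ∀ x y, c.1 (σ x) (σ y) = c.1 x y) (v : PreH c) : cmap c σ (↑v) = ↑(Lq c σ v) :=
  Completion.map_coe (uc_Lq hκ) v

lemma cmap_cont : Continuous (cmap c σ) := Completion.continuous_map

lemma cmap_add (hκ : ∀ x y, c.1 (σ x) (σ y) = c.1 x y) (u v : Completion (PreH c)) :
    cmap c σ (u + v) = cmap c σ u + cmap c σ v := by
  refine Completion.induction_on₂ u v ?_ ?_
  · apply isClosed_eq
    · exact (cmap_cont (σ := σ)).comp continuous_add
    · exact ((cmap_cont (σ := σ)).comp continuous_fst).add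
        ((cmap_cont (σ := σ)).comp continuous_snd)
  · intro a b
    rw [← Completion.coe_add, cmap_coe hκ, cmap_coe hκ, cmap_coe hκ, map_add,
      Completion.coe_add]

lemma cmap_dist (hκ : ∀ x y, c.1 (σ x) (σ y) = c.1 x y) (u v : Completion (PreH c)) :
    dist (cmap c σ u) (cmap c σ v) = dist u v := by
  refine Completion.induction_on₂ u v ?_ ?_
  · apply isClosed_eq
    · exact continuous_dist.comp
        (((cmap_cont (σ := σ)).comp continuous_fst).prodMk
          ((cmap_cont (σ := σ)).comp continuous_snd))
    · exact continuous_dist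
  · intro a b
    rw [cmap_coe hκ, cmap_coe hκ, Completion.dist_eq, Completion.dist_eq]
    exact (isometry_Lq hκ).dist_eq a b

lemma cmap_id (hσ : ∀ x, σ x = x) (u : Completion (PreH c)) : cmap c σ u = u := by
  have hfun : ⇑(Lq c σ) = id := by
    funext v
    apply PreH.ext
    simp only [Lq_val, id_eq]
    have : σ = id := funext hσ
    rw [this, Lf, Finsupp.lmapDomain_id, LinearMap.id_apply]
  rw [cmap, hfun, Completion.map_id, id_eq]

lemma cmap_comp (hκ : ∀ x y, c.1 (σ x) (σ y) = c.1 x y)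
    (hκ' : ∀ x y, c.1 (σ' x) (σ' y) = c.1 x y) (u : Completion (PreH c)) :
    cmap c σ' (cmap c σ u) = cmap c (σ' ∘ σ) u := by
  have hfun : ⇑(Lq c σ') ∘ ⇑(Lq c σ) = ⇑(Lq c (σ' ∘ σ)) := by
    funext v
    apply PreH.ext
    simp only [Function.comp_apply, Lq_val, Lf, Finsupp.lmapDomain_apply,
      Finsupp.mapDomain_comp]
  calc cmap c σ' (cmap c σ u)
      = (Completion.map (Lq c σ') ∘ Completion.map (Lq c σ)) u := rfl
    _ = Completion.map (⇑(Lq c σ') ∘ ⇑(Lq c σ)) u := by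
        rw [Completion.map_comp (uc_Lq hκ') (uc_Lq hκ)]
    _ = cmap c (σ' ∘ σ) u := by rw [hfun]; rfl

end cmapLemmas
open Filter in
lemma exists_rho_plus {X : Type*} [MetricSpace X] {k : X → X → ℝ}
    (hctrl : IsControlledKernel k) :
    ∃ ρp : ℝ → ℝ, Monotone ρp ∧ ∀ x y : X, Real.sqrt (k x y) ≤ ρp (dist x y) := by
  have hB := fun n : ℕ => (hctrl n (Nat.cast_nonneg n)).choose_spec
  set B : ℕ → ℝ := fun n => (hctrl n (Nat.cast_nonneg n)).choose with hBdef
  refine ⟨fun t => Real.sqrt (∑ m ∈ Finset.range (⌈t⌉₊ + 1), B m), ?_, ?_⟩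
  · intro t s hts
    apply Real.sqrt_le_sqrt
    apply Finset.sum_le_sum_of_subset_of_nonneg
      (Finset.range_subset_range.mpr (Nat.succ_le_succ (Nat.ceil_mono hts)))
    intro m _ _; exact (hB m).1
  · intro x y
    apply Real.sqrt_le_sqrt
    calc k x y ≤ B ⌈dist x y⌉₊ :=
          (hB ⌈dist x y⌉₊).2 x y (Nat.le_ceil _)
      _ ≤ ∑ m ∈ Finset.range (⌈dist x y⌉₊ + 1), B m := by
          apply Finset.single_le_sum (fun m _ => (hB m).1)
          exact Finset.self_mem_range_succ _

open Filter in
lemma exists_rho_minus {X : Type*} [MetricSpace X] {k : X → X → ℝ}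
    (hprop : IsProperKernel k) (hnn : ∀ x y : X, 0 ≤ k x y) :
    ∃ ρm : ℝ → ℝ, Monotone ρm ∧ Tendsto ρm atTop atTop ∧
      ∀ x y : X, ρm (dist x y) ≤ Real.sqrt (k x y) := by
  have hS := fun n : ℕ => (hprop n (Nat.cast_nonneg n)).choose_spec
  set S : ℕ → ℝ := fun n => (hprop n (Nat.cast_nonneg n)).choose with hSdef
  set T : ℕ → ℝ := fun n => n + ∑ m ∈ Finset.range (n + 1), S m with hTdef
  have hT0 : ∀ n, (0:ℝ) ≤ T n := by
    intro n
    have : (0:ℝ) ≤ ∑ m ∈ Finset.range (n + 1), S m :=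
      Finset.sum_nonneg fun m _ => (hS m).1
    positivity
  have hTmono : Monotone T := by
    intro n n' h
    have h1 : (n:ℝ) ≤ n' := Nat.cast_le.mpr h
    have h2 : ∑ m ∈ Finset.range (n + 1), S m ≤ ∑ m ∈ Finset.range (n' + 1), S m := by
      apply Finset.sum_le_sum_of_subset_of_nonneg
      · exact Finset.range_subset_range.mpr (by omega)
      · intro m _ _; exact (hS m).1
    simpa [hTdef] using add_le_add h1 h2
  have hTS : ∀ n, S n ≤ T n := by
    intro n
    have h2 : S n ≤ ∑ m ∈ Finset.range (n + 1), S m :=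
      Finset.single_le_sum (fun m _ => (hS m).1) (Finset.self_mem_range_succ _)
    have : (0:ℝ) ≤ n := Nat.cast_nonneg n
    simp only [hTdef]; linarith
  have hTn : ∀ n : ℕ, (n:ℝ) ≤ T n := by
    intro n
    have : (0:ℝ) ≤ ∑ m ∈ Finset.range (n + 1), S m :=
      Finset.sum_nonneg fun m _ => (hS m).1
    simp only [hTdef]; linarith
  set mf : ℝ → ℕ := fun t => ((Finset.range ⌈t⌉₊).filter fun n => T n < t).card with hmfdef
  refine ⟨fun t => Real.sqrt ((mf t : ℝ) - 1), ?_, ?_, ?_⟩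
  · intro t s hts
    apply Real.sqrt_le_sqrt
    have : mf t ≤ mf s := by
      apply Finset.card_le_card
      intro n hn
      simp only [Finset.mem_filter, Finset.mem_range] at hn ⊢
      exact ⟨lt_of_lt_of_le hn.1 (Nat.ceil_mono hts), lt_of_lt_of_le hn.2 hts⟩
    have := (Nat.cast_le (α := ℝ)).mpr this
    linarith
  · rw [tendsto_atTop_atTop]
    intro b
    set N : ℕ := ⌈(max b 0)^2⌉₊ with hNdef
    have hNb : b ≤ Real.sqrt N := by
      calc b ≤ max b 0 := le_max_left _ _
        _ = Real.sqrt ((max b 0)^2) := by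
            rw [Real.sqrt_sq (le_max_right _ _)]
        _ ≤ Real.sqrt N := Real.sqrt_le_sqrt (Nat.le_ceil _)
    refine ⟨max (T N) N + 1, fun t ht => ?_⟩
    have hsub : Finset.range (N + 1) ⊆ (Finset.range ⌈t⌉₊).filter fun n => T n < t := by
      intro n hn
      rw [Finset.mem_range] at hn
      have hnN : n ≤ N := by omega
      rw [Finset.mem_filter, Finset.mem_range]
      constructor
      · rw [Nat.lt_ceil]
        calc (n:ℝ) ≤ N := Nat.cast_le.mpr hnN
          _ < max (T N) N + 1 := by
              have := le_max_right (T N) (N:ℝ); linarith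
          _ ≤ t := ht
      · calc T n ≤ T N := hTmono hnN
          _ < max (T N) N + 1 := by
              have := le_max_left (T N) (N:ℝ); linarith
          _ ≤ t := ht
    have hcard : N + 1 ≤ mf t := by
      simpa using Finset.card_le_card hsub
    calc b ≤ Real.sqrt N := hNb
      _ ≤ Real.sqrt ((mf t : ℝ) - 1) := by
          apply Real.sqrt_le_sqrt
          have := (Nat.cast_le (α := ℝ)).mpr hcard
          push_cast at this
          linarith
  · intro x y
    apply Real.sqrt_le_sqrt
    set t := dist x y with htdef
    rcases Nat.eq_zero_or_pos (mf t) with h0 | hpos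
    · rw [h0]; push_cast; linarith [hnn x y]
    · set sfin := (Finset.range ⌈t⌉₊).filter (fun n => T n < t) with hsdef
      have hne : sfin.Nonempty := Finset.card_pos.mp hpos
      set M := sfin.max' hne with hMdef
      have hMmem : M ∈ sfin := Finset.max'_mem _ _
      rw [Finset.mem_filter] at hMmem
      have hTM : T M < t := hMmem.2
      have hkM : (M:ℝ) < k x y := by
        by_contra hle
        push_neg at hle
        have := (hS M).2 x y hle
        have := hTS M
        linarith
      have hcard : mf t ≤ M + 1 := by
        have : sfin ⊆ Finset.range (M + 1) := by
          intro n hn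
          rw [Finset.mem_range, Nat.lt_succ_iff]
          exact Finset.le_max' _ n hn
        simpa using Finset.card_le_card this
      have := (Nat.cast_le (α := ℝ)).mpr hcard
      push_cast at this
      linarith
lemma cnd_sq_dist {X : Type*} {H : Type*} [NormedAddCommGroup H] [InnerProductSpace ℝ H]
    (f : X → H) : IsCondNegDef (fun x y => dist (f x) (f y) ^ 2) := by
  refine ⟨fun x => by simp, fun x y => by
    show dist (f x) (f y) ^ 2 = dist (f y) (f x) ^ 2
    rw [dist_comm], ?_⟩
  intro n y c hc
  set u : Fin n → H := fun i => f (y i) with hu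
  have expand : ∀ i j, dist (u i) (u j) ^ 2 =
      ‖u i‖ ^ 2 - 2 * (inner ℝ (u i) (u j) : ℝ) + ‖u j‖ ^ 2 := by
    intro i j
    rw [dist_eq_norm, @norm_sub_sq_real]
  have key : ∑ i, ∑ j, c i * c j * dist (u i) (u j) ^ 2 =
      (∑ i, c i * ‖u i‖ ^ 2) * (∑ j, c j) + (∑ i, c i) * (∑ j, c j * ‖u j‖ ^ 2)
        - 2 * (inner ℝ (∑ i, c i • u i) (∑ j, c j • u j) : ℝ) := by
    rw [sum_inner]
    simp_rw [inner_sum, real_inner_smul_left, real_inner_smul_right, expand,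
      Finset.mul_sum, Finset.sum_mul]
    rw [← Finset.sum_add_distrib]
    simp_rw [← Finset.sum_sub_distrib, ← Finset.sum_add_distrib, ← Finset.sum_sub_distrib]
    refine Finset.sum_congr rfl fun i _ => Finset.sum_congr rfl fun j _ => by ring
  calc ∑ i, ∑ j, c i * c j * dist (u i) (u j) ^ 2
      = (∑ i, c i * ‖u i‖ ^ 2) * (∑ j, c j) + (∑ i, c i) * (∑ j, c j * ‖u j‖ ^ 2)
        - 2 * (inner ℝ (∑ i, c i • u i) (∑ j, c j • u j) : ℝ) := key
    _ = - (2 * (inner ℝ (∑ i, c i • u i) (∑ i, c i • u i) : ℝ)) := by rw [hc]; ring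
    _ ≤ 0 := by
        have := real_inner_self_nonneg (x := ∑ i, c i • u i)
        linarith

lemma countable_of_bg {X : Type*} [MetricSpace X] (hbg : BoundedGeometry X) : Countable X := by
  rcases isEmpty_or_nonempty X with h | h
  · infer_instance
  · obtain ⟨x₀⟩ := h
    rw [← Set.countable_univ_iff]
    have hsub : (Set.univ : Set X) ⊆ ⋃ n : ℕ, {y : X | dist x₀ y ≤ n} := by
      intro y _
      exact Set.mem_iUnion.mpr ⟨⌈dist x₀ y⌉₊, show dist x₀ y ≤ _ from Nat.le_ceil _⟩
    refine Set.Countable.mono hsub ?_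
    exact Set.countable_iUnion fun n =>
      (((hbg n (Nat.cast_nonneg n)).choose_spec x₀).1).countable
open UniformSpace

theorem equivariant_coarse_embedding_iff_exists_kernel
    {Γ X : Type*} [Group Γ] [Countable Γ] [MetricSpace X]
    (ρ : RightAction Γ X) (hfree : ρ.IsFree) (hproper : ρ.IsProper)
    (hiso : ρ.IsIsometric) (hbg : BoundedGeometry X) :
    (∃ (D : HilbertRight Γ) (f : X → D.H),
        (∀ (x : X) (γ : Γ), f (ρ.act x γ) = D.τ.act (f x) γ) ∧ IsCoarseEmbedding f) ↔
    (∃ k : X → X → ℝ,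
        (∀ (x y : X) (γ : Γ), k (ρ.act x γ) (ρ.act y γ) = k x y) ∧
        IsCondNegDef k ∧ IsControlledKernel k ∧ IsProperKernel k) := by
  rcases isEmpty_or_nonempty X with hX | hX
  · apply iff_of_true
    · refine ⟨{ H := ℝ
                τ := { act := fun u _ => u, act_one := fun _ => rfl,
                       act_mul := fun _ _ _ => rfl }
                isom := fun _ _ _ => rfl },
              fun x => (hX.elim x), fun x => (hX.elim x), ?_⟩
      exact ⟨id, id, monotone_id, monotone_id, Filter.tendsto_id,
        fun x => (hX.elim x)⟩
    · refine ⟨fun _ _ => 0, fun x => (hX.elim x), ⟨fun _ => rfl, fun _ _ => rfl, ?_⟩,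
        fun R hR => ⟨0, le_refl 0, fun x _ _ => le_refl 0⟩,
        fun C hC => ⟨0, le_refl 0, fun x => (hX.elim x)⟩⟩
      intro n y c _
      simp
  constructor
  · -- forward direction
    rintro ⟨D, f, hequiv, ρm, ρp, hmono, hpmono, htend, hbounds⟩
    refine ⟨fun x y => dist (f x) (f y) ^ 2, ?_, cnd_sq_dist f, ?_, ?_⟩
    · intro x y γ
      show dist (f (ρ.act x γ)) (f (ρ.act y γ)) ^ 2 = dist (f x) (f y) ^ 2
      rw [hequiv, hequiv, D.isom]
    · intro R hR
      refine ⟨(ρp R) ^ 2, sq_nonneg _, fun x y hd => ?_⟩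
      have h1 := (hbounds x y).2
      have h2 : ρp (dist x y) ≤ ρp R := hpmono hd
      exact pow_le_pow_left₀ dist_nonneg (h1.trans h2) 2
    · intro C hC
      obtain ⟨t₀, ht₀⟩ := Filter.tendsto_atTop_atTop.mp htend (Real.sqrt C + 1)
      refine ⟨max t₀ 0, le_max_right _ _, fun x y hk => ?_⟩
      by_contra hgt
      push_neg at hgt
      have h1 : Real.sqrt C + 1 ≤ ρm (dist x y) :=
        ht₀ _ (le_of_lt (lt_of_le_of_lt (le_max_left t₀ 0) hgt))
      have h2 : ρm (dist x y) ≤ dist (f x) (f y) := (hbounds x y).1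
      have h3 : dist (f x) (f y) ≤ Real.sqrt C :=
        (Real.le_sqrt dist_nonneg hC).mpr hk
      linarith
  · -- backward direction
    rintro ⟨k, hinv, hcnd, hctrl, hprop⟩
    haveI := countable_of_bg hbg
    haveI : Small.{0} X := Countable.toSmall X
    set e : X ≃ Shrink X := equivShrink X with he
    set κ : Shrink X → Shrink X → ℝ := fun u v => k (e.symm u) (e.symm v) with hκdef
    have hκcnd : IsCondNegDef κ :=
      ⟨fun u => hcnd.1 _, fun u v => hcnd.2.1 _ _,
       fun n y c hc => hcnd.2.2 n (fun i => e.symm (y i)) c hc⟩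
    set c : CNDK (Shrink X) := ⟨κ, hκcnd⟩ with hcdef
    set σ : Γ → Shrink X → Shrink X := fun γ u => e (ρ.act (e.symm u) γ) with hσdef
    have hσκ : ∀ (γ : Γ) (u v : Shrink X), c.1 (σ γ u) (σ γ v) = c.1 u v := by
      intro γ u v
      simp only [hcdef, hκdef, hσdef, Equiv.symm_apply_apply]
      exact hinv _ _ γ
    have hσ_one : ∀ u, σ 1 u = u := by
      intro u
      simp only [hσdef, ρ.act_one, Equiv.apply_symm_apply]
    have hσ_mul : ∀ (γ δ : Γ) (u : Shrink X), σ δ (σ γ u) = σ (γ * δ) u := by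
      intro γ δ u
      simp only [hσdef, Equiv.symm_apply_apply, ρ.act_mul]
    set x₀ : X := Classical.arbitrary X with hx₀
    set y₀ : Shrink X := e x₀ with hy₀
    refine ⟨{ H := Completion (PreH c)
              τ := { act := fun u γ => cmap c (σ γ) u + ↑(dl c (σ γ y₀) y₀)
                     act_one := ?_
                     act_mul := ?_ }
              isom := ?_ },
            fun x => ↑(dl c (e x) y₀), ?_, ?_⟩
    · intro u
      show cmap c (σ 1) u + ↑(dl c (σ 1 y₀) y₀) = u
      rw [cmap_id hσ_one, hσ_one y₀, dl_self, Completion.coe_zero, add_zero]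
    · intro u γ δ
      show cmap c (σ δ) (cmap c (σ γ) u + ↑(dl c (σ γ y₀) y₀)) + ↑(dl c (σ δ y₀) y₀)
        = cmap c (σ (γ * δ)) u + ↑(dl c (σ (γ * δ) y₀) y₀)
      rw [cmap_add (hσκ δ), cmap_comp (hσκ γ) (hσκ δ),
        show σ δ ∘ σ γ = σ (γ * δ) from funext (hσ_mul γ δ), cmap_coe (hσκ δ), Lq_dl,
        hσ_mul γ δ y₀, add_assoc, ← Completion.coe_add, dl_add]
    · intro u v γ
      show dist (cmap c (σ γ) u + _) (cmap c (σ γ) v + _) = dist u v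
      rw [dist_add_right]
      exact cmap_dist (hσκ γ) u v
    · intro x γ
      show (↑(dl c (e (ρ.act x γ)) y₀) : Completion (PreH c))
        = cmap c (σ γ) ↑(dl c (e x) y₀) + ↑(dl c (σ γ y₀) y₀)
      rw [cmap_coe (hσκ γ), Lq_dl, ← Completion.coe_add, dl_add]
      have : σ γ (e x) = e (ρ.act x γ) := by
        simp only [hσdef, Equiv.symm_apply_apply]
      rw [this]
    · have hdist : ∀ x y : X,
          dist ((↑(dl c (e x) y₀) : Completion (PreH c))) (↑(dl c (e y) y₀)) =
            Real.sqrt (k x y) := by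
        intro x y
        rw [Completion.dist_eq, dist_eq_norm, dl_sub, norm_dl]
        simp only [hcdef, hκdef, Equiv.symm_apply_apply]
      obtain ⟨ρp, hpm, hub⟩ := exists_rho_plus hctrl
      obtain ⟨ρm, hmm, htd, hlb⟩ := exists_rho_minus hprop (nonneg_of_cnd hcnd)
      refine ⟨ρm, ρp, hmm, hpm, htd, fun x y => ?_⟩
      rw [hdist x y]
      exact ⟨hlb x y, hub x y⟩
end Constr
end

section
/- Let X be a metric space with bounded geometry equipped with a free, proper, isometric right action of a countable discrete group Γ, and let k : X × X → ℝ be a Γ-invariant conditionally negative definite kernel which is controlled and proper. Then there exist a real Hilbert space H, a right action of Γ on H by isometries, and a Γ-equivariant map f : X → H satisfying ‖f(x) − f(y)‖² = k(x,y) for all x, y ∈ X; in particular, f is a Γ-equivariant coarse embedding of X into Hilbert space. -/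
open Finsupp UniformSpace

noncomputable section GNSAux

def gnsSum : (ℕ →₀ ℝ) →ₗ[ℝ] ℝ := Finsupp.lsum ℝ (fun _ => LinearMap.id)

lemma gnsSum_single (m : ℕ) (a : ℝ) : gnsSum (Finsupp.single m a) = a := by
  simp [gnsSum]

def gnsV : Submodule ℝ (ℕ →₀ ℝ) := LinearMap.ker gnsSum

def gnsRow (K : ℕ → ℕ → ℝ) (m : ℕ) : (ℕ →₀ ℝ) →ₗ[ℝ] ℝ :=
  Finsupp.lsum ℝ (fun n => LinearMap.toSpanSingleton ℝ ℝ (-(1/2) * K m n))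

def gnsB (K : ℕ → ℕ → ℝ) : (ℕ →₀ ℝ) →ₗ[ℝ] (ℕ →₀ ℝ) →ₗ[ℝ] ℝ :=
  Finsupp.lsum ℝ (fun m => LinearMap.toSpanSingleton ℝ ((ℕ →₀ ℝ) →ₗ[ℝ] ℝ) (gnsRow K m))

lemma gnsB_apply (K : ℕ → ℕ → ℝ) (c d : ℕ →₀ ℝ) :
    gnsB K c d = c.sum fun m a => d.sum fun n b => a * (b * (-(1/2) * K m n)) := by
  rw [gnsB, Finsupp.lsum_apply, Finsupp.sum, Finsupp.sum, LinearMap.coe_sum, Finset.sum_apply]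
  refine Finset.sum_congr rfl fun m _ => ?_
  rw [LinearMap.toSpanSingleton_apply, LinearMap.smul_apply, smul_eq_mul, gnsRow,
    Finsupp.lsum_apply, Finsupp.mul_sum]
  exact Finsupp.sum_congr fun n _ => by rw [LinearMap.toSpanSingleton_apply, smul_eq_mul]

lemma gnsB_single_single (K : ℕ → ℕ → ℝ) (m n : ℕ) (a b : ℝ) :
    gnsB K (Finsupp.single m a) (Finsupp.single n b) = a * (b * (-(1/2) * K m n)) := by
  rw [gnsB_apply]
  rw [Finsupp.sum_single_index (by simp), Finsupp.sum_single_index (by simp)]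

lemma gnsB_mapDomain (K : ℕ → ℕ → ℝ) (u v : ℕ → ℕ) (c d : ℕ →₀ ℝ) :
    gnsB K (Finsupp.mapDomain u c) (Finsupp.mapDomain v d)
      = c.sum fun m a => d.sum fun n b => a * (b * (-(1/2) * K (u m) (v n))) := by
  calc gnsB K (Finsupp.mapDomain u c) (Finsupp.mapDomain v d)
      = (Finsupp.mapDomain u c).sum fun m a =>
          (Finsupp.mapDomain v d).sum fun n b => a * (b * (-(1/2) * K m n)) := gnsB_apply ..
    _ = (Finsupp.mapDomain u c).sum fun m a =>
          d.sum fun n b => a * (b * (-(1/2) * K m (v n))) := by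
        refine Finsupp.sum_congr fun m _ => ?_
        exact Finsupp.sum_mapDomain_index (fun n => by ring) (fun n b₁ b₂ => by ring)
    _ = c.sum fun m a => d.sum fun n b => a * (b * (-(1/2) * K (u m) (v n))) := by
        refine Finsupp.sum_mapDomain_index (fun m => ?_) (fun m a₁ a₂ => ?_)
        · simp
        · rw [← Finsupp.sum_add]
          exact Finsupp.sum_congr fun n _ => by ring

lemma gnsB_comm (K : ℕ → ℕ → ℝ) (hsymm : ∀ m n, K m n = K n m) (c d : ℕ →₀ ℝ) :
    gnsB K c d = gnsB K d c := by
  rw [gnsB_apply, gnsB_apply]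
  simp only [Finsupp.sum]
  rw [Finset.sum_comm]
  refine Finset.sum_congr rfl fun n _ => Finset.sum_congr rfl fun m _ => ?_
  rw [hsymm n m]; ring

lemma gnsB_inv_left (K : ℕ → ℕ → ℝ) (u : ℕ → ℕ) (h : ∀ m n, K (u m) n = K m n)
    (c d : ℕ →₀ ℝ) : gnsB K (Finsupp.mapDomain u c) d = gnsB K c d := by
  have := gnsB_mapDomain K u id c d
  rw [Finsupp.mapDomain_id] at this
  rw [this, gnsB_apply]
  simp only [h, id]

lemma gnsB_inv (K : ℕ → ℕ → ℝ) (u : ℕ → ℕ) (h : ∀ m n, K (u m) (u n) = K m n)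
    (c d : ℕ →₀ ℝ) :
    gnsB K (Finsupp.mapDomain u c) (Finsupp.mapDomain u d) = gnsB K c d := by
  rw [gnsB_mapDomain, gnsB_apply]
  simp only [h]

lemma gnsSum_mapDomain (u : ℕ → ℕ) (c : ℕ →₀ ℝ) :
    gnsSum (Finsupp.mapDomain u c) = gnsSum c := by
  rw [gnsSum, Finsupp.lsum_apply, Finsupp.lsum_apply]
  exact Finsupp.sum_mapDomain_index (fun _ => rfl) (fun _ _ _ => rfl)


structure GNSData where
  K : ℕ → ℕ → ℝ
  symm : ∀ m n, K m n = K n m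
  pos : ∀ c : gnsV, 0 ≤ gnsB K c.1 c.1

def GNSpace (_d : GNSData) : Type := gnsV

namespace GNSpace

variable {d : GNSData}

instance : AddCommGroup (GNSpace d) := inferInstanceAs (AddCommGroup gnsV)
instance : Module ℝ (GNSpace d) := inferInstanceAs (Module ℝ gnsV)

def val (c : GNSpace d) : ℕ →₀ ℝ := Subtype.val (c : gnsV)

lemma val_injective : Function.Injective (val (d := d)) := fun _ _ h => Subtype.ext h

@[simp] lemma val_add (c c' : GNSpace d) : (c + c').val = c.val + c'.val := rfl
@[simp] lemma val_sub (c c' : GNSpace d) : (c - c').val = c.val - c'.val := rfl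
@[simp] lemma val_smul (r : ℝ) (c : GNSpace d) : (r • c).val = r • c.val := rfl
@[simp] lemma val_zero : (0 : GNSpace d).val = 0 := rfl

lemma sum_val (c : GNSpace d) : gnsSum c.val = 0 := (c : gnsV).2

def mk (d : GNSData) (c : ℕ →₀ ℝ) (h : gnsSum c = 0) : GNSpace d :=
  (⟨c, LinearMap.mem_ker.mpr h⟩ : gnsV)

@[simp] lemma val_mk (c : ℕ →₀ ℝ) (h : gnsSum c = 0) : (mk d c h).val = c := rfl

instance : Inner ℝ (GNSpace d) := ⟨fun c c' => gnsB d.K c.val c'.val⟩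

lemma inner_def (c c' : GNSpace d) : (inner ℝ c c' : ℝ) = gnsB d.K c.val c'.val := rfl

instance preCore : PreInnerProductSpace.Core ℝ (GNSpace d) where
  inner c c' := gnsB d.K c.val c'.val
  conj_inner_symm c c' := by
    simp only [conj_trivial]
    exact gnsB_comm d.K d.symm c'.val c.val
  re_inner_nonneg c := d.pos (c : gnsV)
  add_left c c' c'' := by simp only [val_add, map_add, LinearMap.add_apply]
  smul_left c c' r := by
    simp only [conj_trivial, val_smul, map_smul, LinearMap.smul_apply, smul_eq_mul]

instance : SeminormedAddCommGroup (GNSpace d) :=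
  InnerProductSpace.Core.toSeminormedAddCommGroup (𝕜 := ℝ) (F := GNSpace d)

instance : NormedSpace ℝ (GNSpace d) :=
  InnerProductSpace.Core.toNormedSpace (𝕜 := ℝ) (F := GNSpace d)

instance : InnerProductSpace ℝ (GNSpace d) where
  norm_sq_eq_re_inner c := by
    have h : ‖c‖ = Real.sqrt (RCLike.re (inner (𝕜 := ℝ) c c)) := rfl
    rw [h, Real.sq_sqrt]
    exact preCore.re_inner_nonneg c
  conj_inner_symm := preCore.conj_inner_symm
  add_left := preCore.add_left
  smul_left := fun x y r => preCore.smul_left x y r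

lemma norm_sq (c : GNSpace d) : ‖c‖ ^ 2 = gnsB d.K c.val c.val := by
  have h := norm_sq_eq_re_inner (𝕜 := ℝ) c
  exact h

end GNSpace

namespace GNSpace

variable {d : GNSData}

/-- Map induced by `Finsupp.mapDomain u`. -/
def dmap (d : GNSData) (u : ℕ → ℕ) : GNSpace d →ₗ[ℝ] GNSpace d where
  toFun c := mk d (Finsupp.mapDomain u c.val) (by rw [gnsSum_mapDomain]; exact c.sum_val)
  map_add' c c' := val_injective <| by
    simp [Finsupp.mapDomain_add]
  map_smul' r c := val_injective <| by
    simp [Finsupp.mapDomain_smul]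

@[simp] lemma val_dmap (u : ℕ → ℕ) (c : GNSpace d) :
    (dmap d u c).val = Finsupp.mapDomain u c.val := rfl

lemma norm_dmap (u : ℕ → ℕ) (hu : ∀ m n, d.K (u m) (u n) = d.K m n) (c : GNSpace d) :
    ‖dmap d u c‖ = ‖c‖ := by
  have h : ‖dmap d u c‖ ^ 2 = ‖c‖ ^ 2 := by
    rw [norm_sq, norm_sq, val_dmap, gnsB_inv d.K u hu]
  have h' := congrArg Real.sqrt h
  rwa [Real.sqrt_sq (norm_nonneg _), Real.sqrt_sq (norm_nonneg _)] at h'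

/-- The linear isometry induced by a `K`-invariant self-map of indices. -/
def dmapₗᵢ (d : GNSData) (u : ℕ → ℕ) (hu : ∀ m n, d.K (u m) (u n) = d.K m n) :
    GNSpace d →ₗᵢ[ℝ] GNSpace d :=
  ⟨dmap d u, norm_dmap u hu⟩

@[simp] lemma dmapₗᵢ_apply (u : ℕ → ℕ) (hu : ∀ m n, d.K (u m) (u n) = d.K m n)
    (c : GNSpace d) : dmapₗᵢ d u hu c = dmap d u c := rfl

end GNSpace

namespace GNSExt

open UniformSpace

variable {d : GNSData}

/-- Extension of a linear isometry to the completion, as an additive monoid hom. -/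
def ext (T : GNSpace d →ₗᵢ[ℝ] GNSpace d) :
    Completion (GNSpace d) →+ Completion (GNSpace d) :=
  AddMonoidHom.completion (T.toLinearMap.toAddMonoidHom) T.continuous

lemma ext_coe (T : GNSpace d →ₗᵢ[ℝ] GNSpace d) (c : GNSpace d) :
    ext T (c : Completion (GNSpace d)) = (T c : Completion (GNSpace d)) :=
  AddMonoidHom.completion_coe _ _ _

lemma ext_continuous (T : GNSpace d →ₗᵢ[ℝ] GNSpace d) : Continuous (ext T) :=
  AddMonoidHom.continuous_completion _ _

lemma ext_dist (T : GNSpace d →ₗᵢ[ℝ] GNSpace d) (u v : Completion (GNSpace d)) :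
    dist (ext T u) (ext T v) = dist u v := by
  induction u, v using Completion.induction_on₂ with
  | hp =>
    apply isClosed_eq
    · exact (((ext_continuous T).comp continuous_fst).dist
        ((ext_continuous T).comp continuous_snd))
    · exact continuous_fst.dist continuous_snd
  | ih a b =>
    rw [ext_coe, ext_coe, Completion.dist_eq, Completion.dist_eq, T.dist_map]

lemma ext_comp (T₁ T₂ T₃ : GNSpace d →ₗᵢ[ℝ] GNSpace d)
    (h : ∀ c, T₁ (T₂ c) = T₃ c) (v : Completion (GNSpace d)) :
    ext T₁ (ext T₂ v) = ext T₃ v := by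
  induction v using Completion.induction_on with
  | hp =>
    apply isClosed_eq
    · exact (ext_continuous T₁).comp (ext_continuous T₂)
    · exact ext_continuous T₃
  | ih a => rw [ext_coe, ext_coe, ext_coe, h]

lemma ext_id (T : GNSpace d →ₗᵢ[ℝ] GNSpace d) (h : ∀ c, ‖T c - c‖ = 0)
    (v : Completion (GNSpace d)) : ext T v = v := by
  induction v using Completion.induction_on with
  | hp => exact isClosed_eq (ext_continuous T) continuous_id
  | ih a =>
    rw [ext_coe]
    have : dist ((T a : Completion (GNSpace d))) (a : Completion (GNSpace d)) = 0 := by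
      rw [Completion.dist_eq, dist_eq_norm, h]
    exact eq_of_dist_eq_zero this

end GNSExt

lemma gnsSum_eq (c : ℕ →₀ ℝ) : gnsSum c = ∑ m ∈ c.support, c m := by
  rw [gnsSum, Finsupp.lsum_apply]; rfl

lemma gnsMapDomain_sub (u : ℕ → ℕ) (a b : ℕ →₀ ℝ) :
    Finsupp.mapDomain u (a - b) = Finsupp.mapDomain u a - Finsupp.mapDomain u b := by
  have h := (Finsupp.lmapDomain ℝ ℝ u).map_sub a b
  simpa [Finsupp.lmapDomain_apply] using h

end GNSAux


/-- GNS construction: a `Γ`-invariant, conditionally negative definite, controlled and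
proper kernel yields a `Γ`-equivariant map `f` into a real Hilbert space with a right
isometric `Γ`-action satisfying `‖f x − f y‖² = k x y`; in particular `f` is a
`Γ`-equivariant coarse embedding. -/
theorem exists_equivariant_coarse_embedding_of_kernel
    {Γ X : Type*} [Group Γ] [Countable Γ] [MetricSpace X]
    (ρ : RightAction Γ X) (hfree : ρ.IsFree) (hproper : ρ.IsProper)
    (hiso : ρ.IsIsometric) (hbg : BoundedGeometry X)
    (k : X → X → ℝ)
    (hinv : ∀ (x y : X) (γ : Γ), k (ρ.act x γ) (ρ.act y γ) = k x y)
    (hcnd : IsCondNegDef k) (hctrl : IsControlledKernel k)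
    (hprop : IsProperKernel k) :
    ∃ (D : HilbertRight Γ) (f : X → D.H),
      (∀ (x : X) (γ : Γ), f (ρ.act x γ) = D.τ.act (f x) γ) ∧
      (∀ x y : X, ‖f x - f y‖ ^ 2 = k x y) ∧
      IsCoarseEmbedding f := by
  obtain ⟨hk0, hksymm, hkcnd⟩ := hcnd
  rcases isEmpty_or_nonempty X with hX | hX
  · -- trivial case: `X` is empty
    refine ⟨⟨ℝ, ⟨fun v _ => v, fun _ => rfl, fun _ _ _ => rfl⟩, fun _ _ _ => rfl⟩,
      fun x => isEmptyElim x, fun x => isEmptyElim x, fun x => isEmptyElim x,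
      id, id, monotone_id, monotone_id, Filter.tendsto_id, fun x => isEmptyElim x⟩
  · -- main case
    have hXcount : Countable X := by
      have h1 : (Set.univ : Set X) ⊆ ⋃ n : ℕ, {y : X | dist (Classical.arbitrary X) y ≤ n} := by
        intro y _
        have hy : dist (Classical.arbitrary X) y ≤ ((⌈dist (Classical.arbitrary X) y⌉₊ : ℕ) : ℝ) :=
          Nat.le_ceil _
        exact Set.mem_iUnion.mpr ⟨⌈dist (Classical.arbitrary X) y⌉₊, hy⟩
      have h2 : (Set.univ : Set X).Countable := by
        refine Set.Countable.mono h1 (Set.countable_iUnion fun n => ?_)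
        obtain ⟨N, hN⟩ := hbg n (Nat.cast_nonneg n)
        exact (hN (Classical.arbitrary X)).1.countable
      exact Set.countable_univ_iff.mp h2
    obtain ⟨π, hπ⟩ := exists_surjective_nat X
    set σ : X → ℕ := fun x => (hπ x).choose with hσdef
    have hσ : ∀ x, π (σ x) = x := fun x => (hπ x).choose_spec
    set x₀ : X := Classical.arbitrary X with hx₀def
    set K : ℕ → ℕ → ℝ := fun m n => k (π m) (π n) with hKdef
    have hpos : ∀ c : gnsV, 0 ≤ gnsB K c.1 c.1 := by
      intro c
      set s : Finset ℕ := c.1.support with hs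
      set q : s ≃ Fin s.card := s.equivFin with hq
      have h1 : ∀ F : ℕ → ℝ, ∑ i : Fin s.card, F ((q.symm i : ℕ)) = ∑ m ∈ s, F m := by
        intro F
        rw [← Finset.sum_coe_sort s F]
        exact Equiv.sum_comp q.symm (fun x : s => F (x : ℕ))
      have hsum0 : ∑ i : Fin s.card, c.1 ((q.symm i : ℕ)) = 0 := by
        rw [h1]
        have hker : gnsSum c.1 = 0 := LinearMap.mem_ker.mp c.2
        rw [gnsSum_eq] at hker
        exact hker
      have key := hkcnd s.card (fun i => π ((q.symm i : ℕ))) (fun i => c.1 ((q.symm i : ℕ))) hsum0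
      have h2 : ∑ i : Fin s.card, ∑ j : Fin s.card,
          c.1 ((q.symm i : ℕ)) * c.1 ((q.symm j : ℕ)) *
            k (π ((q.symm i : ℕ))) (π ((q.symm j : ℕ)))
          = ∑ m ∈ s, ∑ n ∈ s, c.1 m * c.1 n * K m n := by
        rw [h1 (fun m => ∑ j : Fin s.card, c.1 m * c.1 ((q.symm j : ℕ)) * K m ((q.symm j : ℕ)))]
        exact Finset.sum_congr rfl fun m _ =>
          h1 (fun n => c.1 m * c.1 n * K m n)
      rw [h2] at key
      have h3 : gnsB K c.1 c.1 = (-(1/2)) * ∑ m ∈ s, ∑ n ∈ s, c.1 m * c.1 n * K m n := by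
        rw [gnsB_apply]
        simp only [Finsupp.sum]
        rw [Finset.mul_sum]
        refine Finset.sum_congr rfl fun m _ => ?_
        rw [Finset.mul_sum]
        exact Finset.sum_congr rfl fun n _ => by ring
      rw [h3]
      nlinarith [key]
    set d : GNSData := ⟨K, fun m n => hksymm (π m) (π n), hpos⟩ with hddef
    -- index maps implementing the action
    set u : Γ → ℕ → ℕ := fun γ n => σ (ρ.act (π n) γ) with hudef
    have hu : ∀ γ m n, d.K (u γ m) (u γ n) = d.K m n := by
      intro γ m n
      show k (π (σ (ρ.act (π m) γ))) (π (σ (ρ.act (π n) γ))) = k (π m) (π n)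
      rw [hσ, hσ, hinv]
    set T : Γ → (GNSpace d →ₗᵢ[ℝ] GNSpace d) := fun γ => GNSpace.dmapₗᵢ d (u γ) (hu γ) with hTdef
    have hTval : ∀ γ c, (T γ c).val = Finsupp.mapDomain (u γ) c.val := fun γ c => rfl
    -- the cocycle
    have hbsum : ∀ x : X, gnsSum (Finsupp.single (σ x) (1 : ℝ) - Finsupp.single (σ x₀) 1) = 0 := by
      intro x; rw [map_sub, gnsSum_single, gnsSum_single, sub_self]
    set e : X → GNSpace d := fun x =>
      GNSpace.mk d (Finsupp.single (σ x) 1 - Finsupp.single (σ x₀) 1) (hbsum x) with hedef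
    set b : Γ → GNSpace d := fun γ => e (ρ.act x₀ γ) with hbdef
    have hTcomp : ∀ (γ δ : Γ) (c : GNSpace d), T δ (T γ c) = T (γ * δ) c := by
      intro γ δ c
      apply GNSpace.val_injective
      rw [hTval, hTval, hTval, ← Finsupp.mapDomain_comp]
      have huu : u δ ∘ u γ = u (γ * δ) := by
        funext n
        show σ (ρ.act (π (σ (ρ.act (π n) γ))) δ) = σ (ρ.act (π n) (γ * δ))
        rw [hσ, ρ.act_mul]
      rw [huu]
    have hu1 : ∀ m n, d.K (u 1 m) n = d.K m n := by
      intro m n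
      show k (π (σ (ρ.act (π m) 1))) (π n) = k (π m) (π n)
      rw [ρ.act_one, hσ]
    have hT1 : ∀ c : GNSpace d, ‖T 1 c - c‖ = 0 := by
      intro c
      have hsq : ‖T 1 c - c‖ ^ 2 = 0 := by
        rw [GNSpace.norm_sq, GNSpace.val_sub, hTval]
        simp only [map_sub, LinearMap.sub_apply]
        have hl := gnsB_inv_left d.K (u 1) hu1
        rw [hl _ (Finsupp.mapDomain (u 1) c.val), hl _ c.val]
        ring
      exact (pow_eq_zero_iff two_ne_zero).mp hsq
    set τ : RightAction Γ (UniformSpace.Completion (GNSpace d)) :=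
      { act := fun v γ => GNSExt.ext (T γ) v + (b γ : UniformSpace.Completion (GNSpace d))
        act_one := by
          intro v
          show GNSExt.ext (T 1) v + ((b 1 : GNSpace d) : UniformSpace.Completion (GNSpace d)) = v
          have hb1 : b 1 = 0 := by
            apply GNSpace.val_injective
            show Finsupp.single (σ (ρ.act x₀ 1)) (1:ℝ) - Finsupp.single (σ x₀) 1 = (0 : ℕ →₀ ℝ)
            rw [ρ.act_one, sub_self]
          rw [hb1, GNSExt.ext_id (T 1) hT1 v, UniformSpace.Completion.coe_zero, add_zero]
        act_mul := by
          intro v γ δ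
          show GNSExt.ext (T δ) (GNSExt.ext (T γ) v + _) + _ = _
          rw [map_add, GNSExt.ext_comp (T δ) (T γ) (T (γ * δ)) (hTcomp γ δ) v,
            GNSExt.ext_coe, add_assoc, ← UniformSpace.Completion.coe_add]
          congr 1
          apply congrArg
          apply GNSpace.val_injective
          show Finsupp.mapDomain (u δ) (Finsupp.single (σ (ρ.act x₀ γ)) 1 -
              Finsupp.single (σ x₀) 1) + (Finsupp.single (σ (ρ.act x₀ δ)) 1 -
              Finsupp.single (σ x₀) 1) =
            Finsupp.single (σ (ρ.act x₀ (γ * δ))) 1 - Finsupp.single (σ x₀) 1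
          rw [gnsMapDomain_sub, Finsupp.mapDomain_single, Finsupp.mapDomain_single]
          have h1 : u δ (σ (ρ.act x₀ γ)) = σ (ρ.act x₀ (γ * δ)) := by
            show σ (ρ.act (π (σ (ρ.act x₀ γ))) δ) = _
            rw [hσ, ρ.act_mul]
          have h2 : u δ (σ x₀) = σ (ρ.act x₀ δ) := by
            show σ (ρ.act (π (σ x₀)) δ) = _
            rw [hσ]
          rw [h1, h2, sub_add_sub_cancel] } with hτdef
    have hnorm : ∀ x y : X, ‖(e x : UniformSpace.Completion (GNSpace d)) -
        (e y : UniformSpace.Completion (GNSpace d))‖ ^ 2 = k x y := by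
      intro x y
      rw [← UniformSpace.Completion.coe_sub, UniformSpace.Completion.norm_coe,
        GNSpace.norm_sq, GNSpace.val_sub]
      show gnsB d.K ((Finsupp.single (σ x) 1 - Finsupp.single (σ x₀) 1) -
          (Finsupp.single (σ y) 1 - Finsupp.single (σ x₀) 1))
          ((Finsupp.single (σ x) 1 - Finsupp.single (σ x₀) 1) -
          (Finsupp.single (σ y) 1 - Finsupp.single (σ x₀) 1)) = k x y
      rw [sub_sub_sub_cancel_right]
      simp only [map_sub, LinearMap.sub_apply, gnsB_single_single]
      show 1 * (1 * (-(1/2) * k (π (σ x)) (π (σ x)))) -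
          1 * (1 * (-(1/2) * k (π (σ y)) (π (σ x)))) -
          (1 * (1 * (-(1/2) * k (π (σ x)) (π (σ y)))) -
            1 * (1 * (-(1/2) * k (π (σ y)) (π (σ y))))) = k x y
      rw [hσ, hσ, hk0 x, hk0 y, hksymm y x]
      ring
    refine ⟨⟨UniformSpace.Completion (GNSpace d), τ, ?_⟩,
      fun x => (e x : UniformSpace.Completion (GNSpace d)), ?_, ?_, ?_⟩
    · -- isometric action
      intro w w' γ
      show dist (GNSExt.ext (T γ) w + _) (GNSExt.ext (T γ) w' + _) = dist w w'
      rw [dist_add_right, GNSExt.ext_dist]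
    · -- equivariance
      intro x γ
      show _ = GNSExt.ext (T γ) (e x : UniformSpace.Completion (GNSpace d)) + _
      rw [GNSExt.ext_coe, ← UniformSpace.Completion.coe_add]
      apply congrArg
      apply GNSpace.val_injective
      show Finsupp.single (σ (ρ.act x γ)) (1:ℝ) - Finsupp.single (σ x₀) 1 =
        Finsupp.mapDomain (u γ) (Finsupp.single (σ x) 1 - Finsupp.single (σ x₀) 1) +
          (Finsupp.single (σ (ρ.act x₀ γ)) 1 - Finsupp.single (σ x₀) 1)
      rw [gnsMapDomain_sub, Finsupp.mapDomain_single, Finsupp.mapDomain_single]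
      have h1 : u γ (σ x) = σ (ρ.act x γ) := by
        show σ (ρ.act (π (σ x)) γ) = _
        rw [hσ]
      have h2 : u γ (σ x₀) = σ (ρ.act x₀ γ) := by
        show σ (ρ.act (π (σ x₀)) γ) = _
        rw [hσ]
      rw [h1, h2, sub_add_sub_cancel]
    · -- the norm identity
      exact hnorm
    · -- coarse embedding
      have hknn : ∀ x y : X, 0 ≤ k x y := by
        intro x y
        rw [← hnorm x y]
        positivity
      have hdist : ∀ x y : X, dist ((e x : UniformSpace.Completion (GNSpace d)))
          ((e y : UniformSpace.Completion (GNSpace d))) = Real.sqrt (k x y) := by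
        intro x y
        rw [dist_eq_norm, ← Real.sqrt_sq (norm_nonneg ((e x : UniformSpace.Completion (GNSpace d))
          - (e y : UniformSpace.Completion (GNSpace d)))), hnorm x y]
      choose Bf hBf using fun n : ℕ => hctrl n (Nat.cast_nonneg n)
      choose Sf hSf using fun n : ℕ => hprop n (Nat.cast_nonneg n)
      refine ⟨fun t => Real.sqrt
          (((((Finset.range (⌈t⌉₊ + 1)).filter (fun n => Sf n + 1 ≤ t)).card : ℕ) : ℝ) - 1),
        fun t => Real.sqrt (∑ m ∈ Finset.range (⌈t⌉₊ + 1), Bf m), ?_, ?_, ?_, ?_⟩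
      · intro t t' h
        apply Real.sqrt_le_sqrt
        have hsub : ((Finset.range (⌈t⌉₊ + 1)).filter (fun n => Sf n + 1 ≤ t)) ⊆
            ((Finset.range (⌈t'⌉₊ + 1)).filter (fun n => Sf n + 1 ≤ t')) := by
          intro n hn
          rw [Finset.mem_filter, Finset.mem_range] at hn ⊢
          exact ⟨lt_of_lt_of_le hn.1 (Nat.succ_le_succ (Nat.ceil_mono h)), le_trans hn.2 h⟩
        exact sub_le_sub_right (Nat.cast_le.mpr (Finset.card_le_card hsub)) 1
      · intro t t' h
        exact Real.sqrt_le_sqrt (Finset.sum_le_sum_of_subset_of_nonneg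
          (Finset.range_subset_range.mpr (Nat.succ_le_succ (Nat.ceil_mono h)))
          (fun i _ _ => (hBf i).1))
      · rw [Filter.tendsto_atTop_atTop]
        intro bb
        refine ⟨max ((⌈bb ^ 2⌉₊ : ℕ) : ℝ) (∑ m ∈ Finset.range (⌈bb ^ 2⌉₊ + 1), (Sf m + 1)), ?_⟩
        intro t ht
        have htN : ((⌈bb ^ 2⌉₊ : ℕ) : ℝ) ≤ t := le_trans (le_max_left _ _) ht
        have htS : (∑ m ∈ Finset.range (⌈bb ^ 2⌉₊ + 1), (Sf m + 1)) ≤ t :=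
          le_trans (le_max_right _ _) ht
        have hsubset : Finset.range (⌈bb ^ 2⌉₊ + 1) ⊆
            (Finset.range (⌈t⌉₊ + 1)).filter (fun n => Sf n + 1 ≤ t) := by
          intro n hn
          rw [Finset.mem_range] at hn
          rw [Finset.mem_filter, Finset.mem_range]
          constructor
          · have hN : ⌈bb ^ 2⌉₊ ≤ ⌈t⌉₊ := by
              have h' : ⌈((⌈bb ^ 2⌉₊ : ℕ) : ℝ)⌉₊ ≤ ⌈t⌉₊ := Nat.ceil_mono htN
              simpa using h'
            omega
          · calc Sf n + 1 ≤ ∑ m ∈ Finset.range (⌈bb ^ 2⌉₊ + 1), (Sf m + 1) := by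
                  exact Finset.single_le_sum (f := fun m => Sf m + 1)
                    (fun i _ => show (0:ℝ) ≤ Sf i + 1 by linarith [(hSf i).1]) (Finset.mem_range.mpr hn)
            _ ≤ t := htS
        have hcard : (⌈bb ^ 2⌉₊ + 1 : ℕ) ≤
            ((Finset.range (⌈t⌉₊ + 1)).filter (fun n => Sf n + 1 ≤ t)).card := by
          have h' := Finset.card_le_card hsubset
          simpa using h'
        calc bb ≤ Real.sqrt (bb ^ 2) := by
              rw [Real.sqrt_sq_eq_abs]
              exact le_abs_self bb
          _ ≤ Real.sqrt (((((Finset.range (⌈t⌉₊ + 1)).filter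
              (fun n => Sf n + 1 ≤ t)).card : ℕ) : ℝ) - 1) := by
              apply Real.sqrt_le_sqrt
              have h1 : bb ^ 2 ≤ ((⌈bb ^ 2⌉₊ : ℕ) : ℝ) := Nat.le_ceil _
              have h2 : ((⌈bb ^ 2⌉₊ + 1 : ℕ) : ℝ) ≤
                  ((((Finset.range (⌈t⌉₊ + 1)).filter (fun n => Sf n + 1 ≤ t)).card : ℕ) : ℝ) :=
                Nat.cast_le.mpr hcard
              push_cast at h2
              linarith
      · intro x y
        constructor
        · rw [hdist]
          apply Real.sqrt_le_sqrt
          rcases Nat.eq_zero_or_pos ((Finset.range (⌈dist x y⌉₊ + 1)).filter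
              (fun n => Sf n + 1 ≤ dist x y)).card with h0 | hposc
          · rw [h0]
            have := hknn x y
            norm_num
            linarith
          · set F := (Finset.range (⌈dist x y⌉₊ + 1)).filter (fun n => Sf n + 1 ≤ dist x y)
              with hFdef
            have hne : F.Nonempty := Finset.card_pos.mp hposc
            have hmem := F.max'_mem hne
            have hmem2 : Sf (F.max' hne) + 1 ≤ dist x y := (Finset.mem_filter.mp hmem).2
            have hgt : ((F.max' hne : ℕ) : ℝ) < k x y := by
              by_contra hle
              push_neg at hle
              have hd := (hSf (F.max' hne)).2 x y hle
              linarith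
            have hsub : F ⊆ Finset.range (F.max' hne + 1) := by
              intro m hm
              exact Finset.mem_range.mpr (Nat.lt_succ_of_le (F.le_max' m hm))
            have hcard : F.card ≤ F.max' hne + 1 := by
              have h' := Finset.card_le_card hsub
              simpa using h'
            have hc : (F.card : ℝ) ≤ ((F.max' hne : ℕ) : ℝ) + 1 := by exact_mod_cast hcard
            linarith
        · rw [hdist]
          apply Real.sqrt_le_sqrt
          calc k x y ≤ Bf ⌈dist x y⌉₊ := (hBf ⌈dist x y⌉₊).2 x y (Nat.le_ceil _)
            _ ≤ ∑ m ∈ Finset.range (⌈dist x y⌉₊ + 1), Bf m := by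
                exact Finset.single_le_sum (f := fun m => Bf m)
                  (fun i _ => (hBf i).1) (Finset.self_mem_range_succ _)
end

section
/- Let A, B, C be sets regarded as discrete topological spaces, let p_A : A → C and p_B : B → C be maps, and suppose there exists N ∈ ℕ such that the fiber p_A⁻¹(c) has at most N elements for every c ∈ C. Let A ×_C B = {(a,b) ∈ A × B : p_A(a) = p_B(b)} (a discrete space) and let βA ×_{βC} βB = {(x,y) ∈ βA × βB : (βp_A)(x) = (βp_B)(y)}, a compact Hausdorff subspace of βA × βB. Then the unique continuous map β(A ×_C B) → βA ×_{βC} βB extending the canonical inclusion of A ×_C B is a homeomorphism. -/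
open Filter Set Function

/-- The unique continuous extension `βp : βA → βC` of a map `p : A → C` between
discrete spaces to their Stone–Čech compactifications. -/
noncomputable def betaMap {A C : Type*} [TopologicalSpace A] [DiscreteTopology A]
    [TopologicalSpace C] (p : A → C) : StoneCech A → StoneCech C :=
  stoneCechExtend (continuous_stoneCechUnit.comp (continuous_of_discreteTopology (f := p)))

section Aux

variable {X Y : Type*} [TopologicalSpace X] [DiscreteTopology X]
  [TopologicalSpace Y] [DiscreteTopology Y]

lemma betaMap_unit (p : X → Y) (x : X) :
    betaMap p (stoneCechUnit x) = stoneCechUnit (p x) :=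
  congrFun (stoneCechExtend_extends _) x

/-- The canonical map `β X → Ultrafilter X` for a discrete space `X`. -/
noncomputable def discToU (X : Type*) [TopologicalSpace X] [DiscreteTopology X] :
    StoneCech X → Ultrafilter X :=
  stoneCechExtend (continuous_of_discreteTopology (f := (pure : X → Ultrafilter X)))

/-- The canonical map `Ultrafilter X → β X`. -/
noncomputable def uToDisc (X : Type*) [TopologicalSpace X] [DiscreteTopology X] :
    Ultrafilter X → StoneCech X :=
  Ultrafilter.extend stoneCechUnit

lemma discToU_unit (x : X) : discToU X (stoneCechUnit x) = pure x :=
  congrFun (stoneCechExtend_extends _) x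

lemma uToDisc_pure (x : X) : uToDisc X (pure x) = stoneCechUnit x :=
  congrFun (ultrafilter_extend_extends (stoneCechUnit : X → StoneCech X)) x

lemma continuous_discToU : Continuous (discToU X) := continuous_stoneCechExtend _

lemma continuous_uToDisc : Continuous (uToDisc X) := continuous_ultrafilter_extend _

lemma uToDisc_discToU (z : StoneCech X) : uToDisc X (discToU X z) = z := by
  refine congrFun (stoneCech_hom_ext ((continuous_uToDisc).comp (continuous_discToU))
    continuous_id ?_) z
  funext x
  simp [Function.comp, discToU_unit, uToDisc_pure]

lemma discToU_uToDisc (u : Ultrafilter X) : discToU X (uToDisc X u) = u := by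
  refine congrFun (denseRange_pure.equalizer
    ((continuous_discToU).comp (continuous_uToDisc)) continuous_id ?_) u
  funext x
  simp [Function.comp, discToU_unit, uToDisc_pure]

lemma discToU_injective : Function.Injective (discToU X) := by
  intro a b h
  rw [← uToDisc_discToU (X := X) a, ← uToDisc_discToU (X := X) b, h]

lemma ultrafilter_extend_pure_comp (p : X → Y) (b : Ultrafilter X) :
    Ultrafilter.extend (fun x => (pure (p x) : Ultrafilter Y)) b = b.map p := by
  rw [ultrafilter_extend_eq_iff]
  have : b.map (fun x => (pure (p x) : Ultrafilter Y)) = (b.map p).map pure :=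
    (b.map_map p pure).symm
  rw [this]
  exact ultrafilter_converges_iff.mpr (bind_pure _).symm

lemma continuous_ultraMap (p : X → Y) :
    Continuous (fun b : Ultrafilter X => b.map p) := by
  have : (fun b : Ultrafilter X => b.map p)
      = Ultrafilter.extend (fun x => (pure (p x) : Ultrafilter Y)) := by
    funext b; rw [ultrafilter_extend_pure_comp]
  rw [this]
  exact continuous_ultrafilter_extend _

lemma discToU_naturality (p : X → Y) (z : StoneCech X) :
    discToU Y (betaMap p z) = (discToU X z).map p := by
  refine congrFun (stoneCech_hom_ext
    ((continuous_discToU).comp (continuous_stoneCechExtend _))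
    ((continuous_ultraMap p).comp (continuous_discToU)) ?_) z
  funext x
  show discToU Y (betaMap p (stoneCechUnit x)) = Ultrafilter.map p (discToU X (stoneCechUnit x))
  rw [betaMap_unit, discToU_unit, discToU_unit]
  simp

end Aux

section Combinatorics

variable {A B C : Type} (pA : A → C) (pB : B → C)

/-- Surjectivity part: two ultrafilters with equal pushforwards to `C` come from an
ultrafilter on the fibered product. -/
lemma exists_ultra_fibered (U : Ultrafilter A) (V : Ultrafilter B)
    (h : U.map pA = V.map pB) :
    ∃ W : Ultrafilter {x : A × B // pA x.1 = pB x.2},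
      W.map (fun x => x.val.1) = U ∧ W.map (fun x => x.val.2) = V := by
  set P := {x : A × B // pA x.1 = pB x.2}
  set F : Filter P := (Filter.comap (fun x : P => x.val.1) U) ⊓
      (Filter.comap (fun x : P => x.val.2) V) with hF
  have hne : F.NeBot := by
    rw [← Filter.forall_mem_nonempty_iff_neBot]
    intro s hs
    rw [hF, Filter.mem_inf_iff] at hs
    obtain ⟨t₁, ht₁, t₂, ht₂, rfl⟩ := hs
    rw [Filter.mem_comap] at ht₁ ht₂
    obtain ⟨S, hS, hS'⟩ := ht₁
    obtain ⟨T, hT, hT'⟩ := ht₂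
    have h1 : pA '' S ∈ U.map pA :=
      Ultrafilter.mem_map.2 (mem_of_superset hS (subset_preimage_image _ _))
    rw [h] at h1
    have h2 : T ∩ pB ⁻¹' (pA '' S) ∈ V := inter_mem hT (Ultrafilter.mem_map.1 h1)
    obtain ⟨b, hbT, a, haS, hab⟩ := V.nonempty_of_mem h2
    exact ⟨⟨(a, b), hab⟩, hS' haS, hT' hbT⟩
  refine ⟨Ultrafilter.of F, ?_, ?_⟩
  · have hle : (((Ultrafilter.of F).map (fun x : P => x.val.1)) : Filter A) ≤ (U : Filter A) := by
      calc ((Ultrafilter.of F).map (fun x : P => x.val.1) : Filter A)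
          ≤ F.map (fun x : P => x.val.1) := Filter.map_mono (Ultrafilter.of_le F)
        _ ≤ (Filter.comap (fun x : P => x.val.1) U).map (fun x : P => x.val.1) :=
            Filter.map_mono inf_le_left
        _ ≤ U := Filter.map_comap_le
    exact Ultrafilter.coe_injective (Ultrafilter.unique U hle)
  · have hle : (((Ultrafilter.of F).map (fun x : P => x.val.2)) : Filter B) ≤ (V : Filter B) := by
      calc ((Ultrafilter.of F).map (fun x : P => x.val.2) : Filter B)
          ≤ F.map (fun x : P => x.val.2) := Filter.map_mono (Ultrafilter.of_le F)
        _ ≤ (Filter.comap (fun x : P => x.val.2) V).map (fun x : P => x.val.2) :=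
            Filter.map_mono inf_le_right
        _ ≤ V := Filter.map_comap_le
    exact Ultrafilter.coe_injective (Ultrafilter.unique V hle)

/-- A selection function injective on fibers of `pA`, with values in `Fin (N+1)`. -/
lemma exists_fiber_selection (N : ℕ)
    (hN : ∀ c : C, {a : A | pA a = c}.Finite ∧ {a : A | pA a = c}.ncard ≤ N) :
    ∃ s : A → Fin (N + 1), ∀ a a', pA a = pA a' → s a = s a' → a = a' := by
  classical
  have key : ∀ c : C, ∃ g : A → Fin (N + 1), Set.InjOn g {a | pA a = c} := by
    intro c
    have hfin : ({a | pA a = c} : Set A).Finite := (hN c).1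
    haveI : Fintype ({a | pA a = c} : Set A) := hfin.fintype
    have hcard : Fintype.card ({a | pA a = c} : Set A) ≤ Fintype.card (Fin (N + 1)) := by
      have h2 := (hN c).2
      rw [Set.ncard_eq_toFinset_card'] at h2
      rw [Fintype.card_fin, Set.toFinset_card] at *
      omega
    obtain ⟨e⟩ := Function.Embedding.nonempty_of_card_le hcard
    refine ⟨fun a => if h : pA a = c then e ⟨a, h⟩ else 0, ?_⟩
    intro a ha a' ha' hee
    have ha : pA a = c := ha
    have ha' : pA a' = c := ha'
    simp only [dif_pos ha, dif_pos ha'] at hee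
    exact congrArg Subtype.val (e.injective hee)
  choose g hg using key
  refine ⟨fun a => g (pA a) a, fun a a' h hs => ?_⟩
  refine hg (pA a) (by simp) (by simp [h.symm]) ?_
  simpa [h] using hs

/-- Injectivity part: an ultrafilter on the fibered product is determined by its two
pushforwards, given a fiberwise-injective selection function. -/
lemma ultra_fibered_le {N : ℕ} (s : A → Fin (N + 1))
    (hs : ∀ a a', pA a = pA a' → s a = s a' → a = a')
    (W₁ W₂ : Ultrafilter {x : A × B // pA x.1 = pB x.2})
    (h1 : W₁.map (fun x => x.val.1) = W₂.map (fun x => x.val.1))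
    (h2 : W₁.map (fun x => x.val.2) = W₂.map (fun x => x.val.2)) :
    ∀ S ∈ W₂, S ∈ W₁ := by
  -- find the piece of the partition that W₂ lives on
  have hcov : (⋃ k ∈ (Set.univ : Set (Fin (N + 1))),
      {x : {x : A × B // pA x.1 = pB x.2} | s x.val.1 = k}) ∈ W₂ := by
    have : (⋃ k ∈ (Set.univ : Set (Fin (N + 1))),
        {x : {x : A × B // pA x.1 = pB x.2} | s x.val.1 = k}) = Set.univ := by
      ext x
      simp only [Set.mem_iUnion, Set.mem_univ, iff_true, exists_prop, true_and]
      exact ⟨s x.val.1, rfl⟩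
    rw [this]; exact univ_mem
  obtain ⟨k, -, hk2⟩ := (Ultrafilter.finite_biUnion_mem_iff Set.finite_univ).1 hcov
  set Pk : Set {x : A × B // pA x.1 = pB x.2} := {x | s x.val.1 = k} with hPk
  have hk1 : Pk ∈ W₁ := by
    have h5 : (s ⁻¹' {k}) ∈ W₂.map (fun x : {x : A × B // pA x.1 = pB x.2} => x.val.1) :=
      Ultrafilter.mem_map.2 hk2
    rw [← h1] at h5
    exact Ultrafilter.mem_map.1 h5
  -- the second projection is injective on Pk
  have hinj : Set.InjOn (fun x : {x : A × B // pA x.1 = pB x.2} => x.val.2) Pk := by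
    intro x hx y hy hxy
    have hA : pA x.val.1 = pA y.val.1 := by
      rw [x.prop, y.prop]; exact congrArg pB hxy
    have hx1 : x.val.1 = y.val.1 :=
      hs _ _ hA (by rw [show s x.val.1 = k from hx, show s y.val.1 = k from hy])
    exact Subtype.ext (Prod.ext hx1 hxy)
  intro S hS
  have h3 : (fun x : {x : A × B // pA x.1 = pB x.2} => x.val.2) '' (S ∩ Pk)
      ∈ W₂.map (fun x : {x : A × B // pA x.1 = pB x.2} => x.val.2) :=
    Ultrafilter.mem_map.2 (mem_of_superset (inter_mem hS hk2) (subset_preimage_image _ _))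
  rw [← h2] at h3
  have h4 : (fun x : {x : A × B // pA x.1 = pB x.2} => x.val.2) ⁻¹'
      ((fun x : {x : A × B // pA x.1 = pB x.2} => x.val.2) '' (S ∩ Pk)) ∩ Pk ∈ W₁ :=
    inter_mem (Ultrafilter.mem_map.1 h3) hk1
  refine mem_of_superset h4 ?_
  rintro x ⟨⟨y, hy, hxy⟩, hxPk⟩
  have hyx : y = x := hinj hy.2 hxPk hxy
  exact hyx ▸ hy.1

end Combinatorics

/-- If the fibers of `pA : A → C` have at most `N` elements, then the canonical
continuous map `β(A ×_C B) → βA ×_{βC} βB` extending the inclusion of the discrete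
fibered product is a homeomorphism. -/
theorem stoneCech_fibered_product
    {A B C : Type} [TopologicalSpace A] [DiscreteTopology A]
    [TopologicalSpace B] [DiscreteTopology B]
    [TopologicalSpace C] [DiscreteTopology C]
    (pA : A → C) (pB : B → C) (N : ℕ)
    (hN : ∀ c : C, {a : A | pA a = c}.Finite ∧ {a : A | pA a = c}.ncard ≤ N) :
    ∃ F : StoneCech {x : A × B // pA x.1 = pB x.2} ≃ₜ
        {z : StoneCech A × StoneCech B // betaMap pA z.1 = betaMap pB z.2},
      ∀ x : {x : A × B // pA x.1 = pB x.2},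
        (F (stoneCechUnit x) : StoneCech A × StoneCech B) =
          (stoneCechUnit x.val.1, stoneCechUnit x.val.2) := by
  classical
  set P := {x : A × B // pA x.1 = pB x.2}
  set Z := {z : StoneCech A × StoneCech B // betaMap pA z.1 = betaMap pB z.2}
  -- Z is compact Hausdorff
  have hclosed : IsClosed {z : StoneCech A × StoneCech B | betaMap pA z.1 = betaMap pB z.2} :=
    isClosed_eq ((continuous_stoneCechExtend _).comp continuous_fst)
      ((continuous_stoneCechExtend _).comp continuous_snd)
  haveI : CompactSpace Z := isCompact_iff_compactSpace.mp hclosed.isCompact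
  -- the inclusion of the discrete fibered product
  set ι : P → Z := fun x => ⟨(stoneCechUnit x.val.1, stoneCechUnit x.val.2), by
    simp only [betaMap_unit, x.prop]⟩ with hι
  set φ : StoneCech P → Z := stoneCechExtend (continuous_of_discreteTopology (f := ι)) with hφ
  have hφcont : Continuous φ := continuous_stoneCechExtend _
  have hφunit : ∀ x : P, φ (stoneCechUnit x) = ι x :=
    fun x => congrFun (stoneCechExtend_extends _) x
  -- the two projections of φ agree with betaMap of the coordinate projections
  have hproj1 : (fun w => (φ w).val.1) = betaMap (fun x : P => x.val.1) := by
    refine stoneCech_hom_ext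
      ((continuous_fst.comp continuous_subtype_val).comp hφcont)
      (continuous_stoneCechExtend _) ?_
    funext x
    simp [Function.comp, hφunit, hι, betaMap_unit]
  have hproj2 : (fun w => (φ w).val.2) = betaMap (fun x : P => x.val.2) := by
    refine stoneCech_hom_ext
      ((continuous_snd.comp continuous_subtype_val).comp hφcont)
      (continuous_stoneCechExtend _) ?_
    funext x
    simp [Function.comp, hφunit, hι, betaMap_unit]
  -- selection function
  obtain ⟨s, hs⟩ := exists_fiber_selection pA N hN
  -- injectivity
  have hinj : Function.Injective φ := by
    intro x y h
    have e1 : betaMap (fun x : P => x.val.1) x = betaMap (fun x : P => x.val.1) y := by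
      rw [← hproj1]; exact congrArg (fun z : Z => z.val.1) h
    have e2 : betaMap (fun x : P => x.val.2) x = betaMap (fun x : P => x.val.2) y := by
      rw [← hproj2]; exact congrArg (fun z : Z => z.val.2) h
    have m1 : (discToU P x).map (fun x : P => x.val.1)
        = (discToU P y).map (fun x : P => x.val.1) := by
      rw [← discToU_naturality, ← discToU_naturality, e1]
    have m2 : (discToU P x).map (fun x : P => x.val.2)
        = (discToU P y).map (fun x : P => x.val.2) := by
      rw [← discToU_naturality, ← discToU_naturality, e2]
    have hUeq : discToU P x = discToU P y :=
      Ultrafilter.coe_injective (le_antisymm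
        (Filter.le_def.mpr (ultra_fibered_le pA pB s hs _ _ m1 m2))
        (Filter.le_def.mpr (ultra_fibered_le pA pB s hs _ _ m1.symm m2.symm)))
    exact discToU_injective hUeq
  -- surjectivity
  have hsurj : Function.Surjective φ := by
    intro z
    set U := discToU A z.val.1
    set V := discToU B z.val.2
    have hUV : U.map pA = V.map pB := by
      have := congrArg (discToU C) z.prop
      rwa [discToU_naturality, discToU_naturality] at this
    obtain ⟨W, hW1, hW2⟩ := exists_ultra_fibered pA pB U V hUV
    refine ⟨uToDisc P W, ?_⟩
    have hWx : discToU P (uToDisc P W) = W := discToU_uToDisc W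
    have c1 : betaMap (fun x : P => x.val.1) (uToDisc P W) = z.val.1 := by
      apply discToU_injective
      rw [discToU_naturality, hWx, hW1]
    have c2 : betaMap (fun x : P => x.val.2) (uToDisc P W) = z.val.2 := by
      apply discToU_injective
      rw [discToU_naturality, hWx, hW2]
    refine Subtype.ext (Prod.ext ?_ ?_)
    · rw [show (φ (uToDisc P W)).val.1 = betaMap (fun x : P => x.val.1) (uToDisc P W) from
        congrFun hproj1 _, c1]
    · rw [show (φ (uToDisc P W)).val.2 = betaMap (fun x : P => x.val.2) (uToDisc P W) from
        congrFun hproj2 _, c2]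
  refine ⟨Continuous.homeoOfEquivCompactToT2
    (f := Equiv.ofBijective φ ⟨hinj, hsurj⟩) hφcont, ?_⟩
  intro x
  show (φ (stoneCechUnit x)).val = _
  rw [hφunit x]
end

section
/- Let X be a metric space with bounded geometry, let R ≥ 0 and let N_R ∈ ℕ bound the cardinality of every closed ball of radius R in X. Let M ≥ 0 and let f : X × X → ℂ satisfy |f(x,y)| ≤ M for all x, y and f(x,y) = 0 whenever d(x,y) > R. Then there exists a unique bounded linear operator T_f on the Hilbert space ℓ²(X) satisfying ⟨δ_x, T_f δ_y⟩ = f(x,y) for all x, y ∈ X, and its operator norm satisfies ‖T_f‖ ≤ N_R · M. -/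
open scoped ENNReal


/-- A bounded kernel with propagation at most `R` on a bounded geometry space defines
a unique bounded operator on `ℓ²(X)` with the given matrix coefficients, of operator
norm at most `N_R · M`. -/
theorem exists_unique_bounded_operator_of_finite_propagation_kernel
    {X : Type*} [MetricSpace X] [DecidableEq X]
    (R : ℝ) (hR : 0 ≤ R) (NR : ℕ)
    (hN : ∀ x : X, {y : X | dist x y ≤ R}.Finite ∧ {y : X | dist x y ≤ R}.ncard ≤ NR)
    (M : ℝ) (hM : 0 ≤ M) (f : X × X → ℂ)
    (hfbdd : ∀ x y : X, ‖f (x, y)‖ ≤ M)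
    (hfprop : ∀ x y : X, R < dist x y → f (x, y) = 0) :
    ∃ T : lp (fun _ : X => ℂ) 2 →L[ℂ] lp (fun _ : X => ℂ) 2,
      (∀ x y : X,
        (inner ℂ (lp.single 2 x (1 : ℂ)) (T (lp.single 2 y (1 : ℂ))) : ℂ) = f (x, y)) ∧
      ‖T‖ ≤ (NR : ℝ) * M ∧
      ∀ T' : lp (fun _ : X => ℂ) 2 →L[ℂ] lp (fun _ : X => ℂ) 2,
        (∀ x y : X,
          (inner ℂ (lp.single 2 x (1 : ℂ)) (T' (lp.single 2 y (1 : ℂ))) : ℂ) = f (x, y)) →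
        T' = T := by
  classical
  have h2 : (2 : ℝ≥0∞).toReal = 2 := by norm_num
  have h2pos : 0 < (2 : ℝ≥0∞).toReal := by rw [h2]; norm_num
  have hrpow : ∀ a : ℝ, a ^ (2 : ℝ≥0∞).toReal = a ^ (2 : ℕ) := by
    intro a
    rw [h2, show (2 : ℝ) = ((2 : ℕ) : ℝ) by norm_num, Real.rpow_natCast]
  set B : X → Finset X := fun x => (hN x).1.toFinset with hBdef
  have hBmem : ∀ x y : X, y ∈ B x ↔ dist x y ≤ R := by
    intro x y
    simp [hBdef, Set.Finite.mem_toFinset]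
  have hBcard : ∀ x : X, (B x).card ≤ NR := by
    intro x
    have h := (hN x).2
    rwa [Set.ncard_eq_toFinset_card _ (hN x).1] at h
  set Tfun : lp (fun _ : X => ℂ) 2 → X → ℂ := fun g x => ∑ y ∈ B x, f (x, y) * g y
    with hTfun
  -- bound on partial sums of squares of coordinates of a function in ℓ²
  have hg2 : ∀ (g : lp (fun _ : X => ℂ) 2) (t : Finset X),
      ∑ y ∈ t, ‖g y‖ ^ (2 : ℕ) ≤ ‖g‖ ^ (2 : ℕ) := by
    intro g t
    have := lp.sum_rpow_le_norm_rpow h2pos g t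
    simpa only [hrpow] using this
  -- the key estimate
  have key : ∀ (g : lp (fun _ : X => ℂ) 2) (s : Finset X),
      ∑ x ∈ s, ‖Tfun g x‖ ^ (2 : ℝ≥0∞).toReal ≤ (((NR : ℝ) * M) * ‖g‖) ^ (2 : ℝ≥0∞).toReal := by
    intro g s
    simp only [hrpow]
    have step1 : ∀ x : X, ‖Tfun g x‖ ^ (2 : ℕ)
        ≤ (M ^ (2 : ℕ) * (NR : ℝ)) * ∑ y ∈ B x, ‖g y‖ ^ (2 : ℕ) := by
      intro x
      have h1 : ‖Tfun g x‖ ≤ ∑ y ∈ B x, M * ‖g y‖ := by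
        refine (norm_sum_le _ _).trans (Finset.sum_le_sum fun y _ => ?_)
        rw [norm_mul]
        exact mul_le_mul_of_nonneg_right (hfbdd x y) (norm_nonneg _)
      have h2' : ‖Tfun g x‖ ^ (2 : ℕ) ≤ (∑ y ∈ B x, M * ‖g y‖) ^ (2 : ℕ) :=
        pow_le_pow_left₀ (norm_nonneg _) h1 2
      refine h2'.trans ?_
      have hcs := sq_sum_le_card_mul_sum_sq (s := B x) (f := fun y => M * ‖g y‖)
      refine hcs.trans ?_
      have hcard : ((B x).card : ℝ) ≤ (NR : ℝ) := by exact_mod_cast hBcard x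
      calc ((B x).card : ℝ) * ∑ y ∈ B x, (M * ‖g y‖) ^ 2
          ≤ (NR : ℝ) * ∑ y ∈ B x, (M * ‖g y‖) ^ 2 := by
            refine mul_le_mul_of_nonneg_right hcard ?_
            exact Finset.sum_nonneg fun y _ => sq_nonneg _
        _ = (M ^ (2 : ℕ) * (NR : ℝ)) * ∑ y ∈ B x, ‖g y‖ ^ (2 : ℕ) := by
            simp only [Finset.mul_sum]
            exact Finset.sum_congr rfl fun y _ => by ring
    have step2 : ∑ x ∈ s, ∑ y ∈ B x, ‖g y‖ ^ (2 : ℕ) ≤ (NR : ℝ) * ‖g‖ ^ (2 : ℕ) := by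
      set t := s.biUnion B with ht
      have hsub : ∀ x ∈ s, B x ⊆ t := fun x hx => Finset.subset_biUnion_of_mem B hx
      calc ∑ x ∈ s, ∑ y ∈ B x, ‖g y‖ ^ (2 : ℕ)
          = ∑ x ∈ s, ∑ y ∈ t, if y ∈ B x then ‖g y‖ ^ (2 : ℕ) else 0 := by
            refine Finset.sum_congr rfl fun x hx => ?_
            rw [Finset.sum_ite_mem, Finset.inter_eq_right.mpr (hsub x hx)]
        _ = ∑ y ∈ t, ∑ x ∈ s, if y ∈ B x then ‖g y‖ ^ (2 : ℕ) else 0 := Finset.sum_comm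
        _ ≤ ∑ y ∈ t, (NR : ℝ) * ‖g y‖ ^ (2 : ℕ) := by
            refine Finset.sum_le_sum fun y _ => ?_
            rw [← Finset.sum_filter, Finset.sum_const, nsmul_eq_mul]
            have hfs : (s.filter fun x => y ∈ B x) ⊆ B y := by
              intro x hx
              rw [Finset.mem_filter] at hx
              rw [hBmem]
              rw [dist_comm]
              exact (hBmem x y).1 hx.2
            have hc : (((s.filter fun x => y ∈ B x).card : ℝ)) ≤ (NR : ℝ) := by
              exact_mod_cast (Finset.card_le_card hfs).trans (hBcard y)
            exact mul_le_mul_of_nonneg_right hc (by positivity)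
        _ = (NR : ℝ) * ∑ y ∈ t, ‖g y‖ ^ (2 : ℕ) := (Finset.mul_sum _ _ _).symm
        _ ≤ (NR : ℝ) * ‖g‖ ^ (2 : ℕ) := by
            exact mul_le_mul_of_nonneg_left (hg2 g t) (Nat.cast_nonneg NR)
    calc ∑ x ∈ s, ‖Tfun g x‖ ^ (2 : ℕ)
        ≤ ∑ x ∈ s, (M ^ (2 : ℕ) * (NR : ℝ)) * ∑ y ∈ B x, ‖g y‖ ^ (2 : ℕ) :=
          Finset.sum_le_sum fun x _ => step1 x
      _ = (M ^ (2 : ℕ) * (NR : ℝ)) * ∑ x ∈ s, ∑ y ∈ B x, ‖g y‖ ^ (2 : ℕ) :=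
          (Finset.mul_sum _ _ _).symm
      _ ≤ (M ^ (2 : ℕ) * (NR : ℝ)) * ((NR : ℝ) * ‖g‖ ^ (2 : ℕ)) := by
          refine mul_le_mul_of_nonneg_left step2 (by positivity)
      _ = (((NR : ℝ) * M) * ‖g‖) ^ (2 : ℕ) := by ring
  have hmem : ∀ g : lp (fun _ : X => ℂ) 2, Memℓp (Tfun g) 2 := fun g =>
    memℓp_gen' (key g)
  -- the linear map
  set T₀ : lp (fun _ : X => ℂ) 2 →ₗ[ℂ] lp (fun _ : X => ℂ) 2 :=
    { toFun := fun g => ⟨Tfun g, hmem g⟩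
      map_add' := by
        intro g h
        refine lp.ext (funext fun x => ?_)
        have : (⇑(g + h) : X → ℂ) = ⇑g + ⇑h := lp.coeFn_add g h
        simp only [lp.coeFn_add, Pi.add_apply]
        show Tfun (g + h) x = Tfun g x + Tfun h x
        simp only [hTfun, this, Pi.add_apply, mul_add]
        exact Finset.sum_add_distrib
      map_smul' := by
        intro c g
        refine lp.ext (funext fun x => ?_)
        have hc : (⇑(c • g) : X → ℂ) = c • ⇑g := lp.coeFn_smul c g
        simp only [lp.coeFn_smul, Pi.smul_apply, RingHom.id_apply]
        show Tfun (c • g) x = c • Tfun g x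
        simp only [hTfun, hc, Pi.smul_apply, smul_eq_mul, Finset.mul_sum]
        exact Finset.sum_congr rfl fun y _ => by ring }
    with hT₀def
  have hbound : ∀ g : lp (fun _ : X => ℂ) 2, ‖T₀ g‖ ≤ ((NR : ℝ) * M) * ‖g‖ := by
    intro g
    exact lp.norm_le_of_forall_sum_le h2pos (by positivity) (key g)
  set T : lp (fun _ : X => ℂ) 2 →L[ℂ] lp (fun _ : X => ℂ) 2 :=
    T₀.mkContinuous ((NR : ℝ) * M) hbound with hTdef
  have hTapply : ∀ (g : lp (fun _ : X => ℂ) 2) (x : X), (T g) x = Tfun g x := fun g x => rfl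
  have hcoeff : ∀ x y : X,
      (inner ℂ (lp.single 2 x (1 : ℂ)) (T (lp.single 2 y (1 : ℂ))) : ℂ) = f (x, y) := by
    intro x y
    rw [lp.inner_single_left, RCLike.inner_apply, map_one, mul_one, hTapply]
    calc Tfun (lp.single 2 y (1 : ℂ)) x
        = ∑ z ∈ B x, if z = y then f (x, z) else 0 := by
          refine Finset.sum_congr rfl fun z _ => ?_
          rcases eq_or_ne z y with rfl | hzy
          · simp [lp.single_apply_self]
          · simp [lp.single_apply_ne 2 y _ hzy, hzy]
      _ = if y ∈ B x then f (x, y) else 0 := Finset.sum_ite_eq' (B x) y _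
      _ = f (x, y) := by
          split_ifs with h
          · rfl
          · exact (hfprop x y (lt_of_not_ge fun hc => h ((hBmem x y).2 hc))).symm
  refine ⟨T, hcoeff, T₀.mkContinuous_norm_le (by positivity) hbound, ?_⟩
  intro T' hT'
  have hsame : ∀ y : X, T' (lp.single 2 y (1 : ℂ)) = T (lp.single 2 y (1 : ℂ)) := by
    intro y
    refine lp.ext (funext fun x => ?_)
    have h1 := hT' x y
    have h2' := hcoeff x y
    rw [lp.inner_single_left, RCLike.inner_apply, map_one, mul_one] at h1 h2'
    exact h1.trans h2'.symm
  refine ContinuousLinearMap.ext fun g => ?_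
  have hg : HasSum (fun y : X => lp.single 2 y (g y)) g :=
    lp.hasSum_single ENNReal.ofNat_ne_top g
  have h1 : HasSum (fun y : X => T' (lp.single 2 y (g y))) (T' g) := hg.mapL T'
  have h2' : HasSum (fun y : X => T (lp.single 2 y (g y))) (T g) := hg.mapL T
  have heq : ∀ y : X, T' (lp.single 2 y (g y)) = T (lp.single 2 y (g y)) := by
    intro y
    have hsingle : lp.single 2 y (g y) = g y • (lp.single 2 y (1 : ℂ) : lp (fun _ : X => ℂ) 2) := by
      have h := lp.single_smul (E := fun _ : X => ℂ) 2 y (g y) (1 : ℂ)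
      rw [smul_eq_mul, mul_one] at h
      exact h
    rw [hsingle, map_smul, map_smul, hsame y]
  rw [funext heq] at h1
  exact h1.unique h2'
end

section
/- Let X be a set equipped with a right action of a group Γ, let p : X → X/Γ be the orbit map, and let p̄ : βX → β(X/Γ) be the unique continuous extension of p between the Stone–Čech compactifications of the discrete spaces X and X/Γ; equip βX and β(X/Γ) with their Borel σ-algebras. Then there exists a continuous map σ from β(X/Γ) to the space of Borel probability measures on βX (with the topology of weak convergence, i.e., convergence against all bounded continuous functions) such that for every ω ∈ β(X/Γ), the pushforward of σ(ω) under p̄ equals the Dirac measure δ_ω. -/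
namespace RightAction

variable {Γ X : Type*} [Group Γ]

/-- The orbit equivalence relation of a right action. -/
def setoid (ρ : RightAction Γ X) : Setoid X where
  r x y := ∃ γ : Γ, ρ.act x γ = y
  iseqv := by
    refine ⟨fun x => ⟨1, ρ.act_one x⟩, ?_, ?_⟩
    · rintro x y ⟨γ, rfl⟩
      exact ⟨γ⁻¹, by rw [ρ.act_mul, mul_inv_cancel, ρ.act_one]⟩
    · rintro x y z ⟨γ, rfl⟩ ⟨δ, rfl⟩
      exact ⟨γ * δ, (ρ.act_mul x γ δ).symm⟩

end RightAction

/-- There is a continuous section `σ : β(X/Γ) → M₁(βX)` of the pushforward along the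
extended orbit map `p̄ : βX → β(X/Γ)`: for each `ω`, the measure `σ(ω)` is a Borel
probability measure on `βX` pushing forward to the Dirac measure `δ_ω`. -/
theorem exists_continuous_measure_section
    {Γ X : Type*} [Group Γ] [TopologicalSpace X] [DiscreteTopology X]
    (ρ : RightAction Γ X)
    [MeasurableSpace (StoneCech X)] [BorelSpace (StoneCech X)]
    [MeasurableSpace (StoneCech (Quotient ρ.setoid))]
    [BorelSpace (StoneCech (Quotient ρ.setoid))]
    (pbar : StoneCech X → StoneCech (Quotient ρ.setoid))
    (hpcont : Continuous pbar)
    (hpext : ∀ x : X, pbar (stoneCechUnit x) = stoneCechUnit (Quotient.mk ρ.setoid x)) :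
    ∃ σ : StoneCech (Quotient ρ.setoid) → MeasureTheory.ProbabilityMeasure (StoneCech X),
      Continuous σ ∧
      ∀ ω, (σ ω).toMeasure.map pbar = MeasureTheory.Measure.dirac ω := by
  -- A set-theoretic section of the quotient map
  have hs_cont : Continuous (fun q : Quotient ρ.setoid => stoneCechUnit (Quotient.out q)) := by
    rw [isQuotientMap_quotient_mk'.continuous_iff]
    exact continuous_of_discreteTopology
  -- Its Stone–Čech extension β(X/Γ) → βX
  let sbar : StoneCech (Quotient ρ.setoid) → StoneCech X := stoneCechExtend hs_cont
  have hsbar_cont : Continuous sbar := continuous_stoneCechExtend hs_cont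
  have hsec : ∀ ω, pbar (sbar ω) = ω := by
    have : pbar ∘ sbar = id := by
      apply Continuous.ext_on denseRange_stoneCechUnit (hpcont.comp hsbar_cont) continuous_id
      rintro _ ⟨q, rfl⟩
      have h1 : sbar (stoneCechUnit q) = stoneCechUnit (Quotient.out q) :=
        congrFun (stoneCechExtend_extends hs_cont) q
      simp only [Function.comp_apply, id_eq, h1, hpext]
      congr 1
      exact Quotient.out_eq q
    exact fun ω => congrFun this ω
  refine ⟨fun ω => MeasureTheory.diracProba (sbar ω),
    MeasureTheory.continuous_diracProba.comp hsbar_cont, fun ω => ?_⟩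
  have : (MeasureTheory.diracProba (sbar ω)).toMeasure = MeasureTheory.Measure.dirac (sbar ω) :=
    rfl
  rw [this, MeasureTheory.Measure.map_dirac' (hpcont.measurable), hsec]
end
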